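/- arXiv:1412.1517 — 8 statements merged into one kernel-verified Lean document; each statement's English description precedes it below -/
import Mathlib

section
/- Let S be a metric semigroup and let π be a tight Borel probability measure on S such that every π-harmonic function in LUC(S) is constant. Then S is amenable, i.e. there exists a norm-one positive linear functional φ : LUC(S) → ℂ satisfying φ(δ_a * f) = φ(f) for all a ∈ S and all f ∈ LUC(S). -/
/-! Let `Q f = ∫ δ_y * f dπ(y)` be the Markov operator of `π` on `LUC(S)`. A weak-* cluster point
of the Cesàro averages of `f ↦ (Qᵏ f)(x₀)` is a positive mean `m` with `m ∘ Q = m`. For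
`f ∈ LUC(S)` the function `x ↦ m(δ_x * f)` lies in `LUC(S)` and is `π`-harmonic, because
`δ_{xy} * f = δ_y * (δ_x * f)` and `m` commutes with the integral defining `Q`; by the Liouville
property it is constant, so `φ f = m(δ_{x₀} * f)` is a left-invariant mean. Tightness is what makes
`y ↦ δ_y * f` Bochner integrable in the (possibly non-separable) space `LUC(S)`. -/

open MeasureTheory BoundedContinuousFunction Filter Topology
open scoped ENNReal

/-- The left translate `δ_a * f` of a bounded continuous function `f`,
`(δ_a * f)(x) = f (a * x)`. -/
noncomputable def lTrans {S : Type*} [Semigroup S] [MetricSpace S] [ContinuousMul S]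
    (a : S) (f : S →ᵇ ℂ) : S →ᵇ ℂ :=
  f.compContinuous ⟨fun x => a * x, continuous_const.mul continuous_id⟩

/-- `LUC S` is the space of bounded (left) uniformly continuous functions on `S`, i.e.
bounded continuous `f : S → ℂ` such that `a ↦ δ_a * f` is continuous into `S →ᵇ ℂ`. -/
noncomputable def LUC (S : Type*) [Semigroup S] [MetricSpace S] [ContinuousMul S] :
    Submodule ℂ (S →ᵇ ℂ) where
  carrier := {f | Continuous fun a : S => lTrans a f}
  add_mem' := by
    intro f g hf hg
    show Continuous fun a : S => lTrans a (f + g)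
    have h : (fun a : S => lTrans a (f + g)) = fun a : S => lTrans a f + lTrans a g := by
      funext a; ext x; simp [lTrans]
    rw [h]; exact hf.add hg
  zero_mem' := by
    show Continuous fun a : S => lTrans a (0 : S →ᵇ ℂ)
    have h : (fun a : S => lTrans a (0 : S →ᵇ ℂ)) = fun _ => (0 : S →ᵇ ℂ) := by
      funext a; ext x; simp [lTrans]
    rw [h]; exact continuous_const
  smul_mem' := by
    intro c f hf
    show Continuous fun a : S => lTrans a (c • f)
    have h : (fun a : S => lTrans a (c • f)) = fun a : S => c • lTrans a f := by
      funext a; ext x; simp [lTrans]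
    rw [h]; exact hf.const_smul c

/-- The left translate `δ_a * f` of an element of `LUC S`, as an element of `LUC S`. -/
noncomputable def lTransL {S : Type*} [Semigroup S] [MetricSpace S] [ContinuousMul S]
    (a : S) (f : LUC S) : LUC S :=
  ⟨lTrans a f.1, by
    show Continuous fun b : S => lTrans b (lTrans a f.1)
    have h : (fun b : S => lTrans b (lTrans a f.1)) = fun b : S => lTrans (a * b) f.1 := by
      funext b; ext x; simp [lTrans, mul_assoc]
    rw [h]; exact f.2.comp (continuous_mul_left a)⟩

open scoped ComplexOrder

section CesaroMean

variable {𝕜 E : Type*} [RCLike 𝕜] [NormedAddCommGroup E] [NormedSpace 𝕜 E]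

noncomputable def cesaroMean (T : E →L[𝕜] E) (ψ : StrongDual 𝕜 E) (n : ℕ) : StrongDual 𝕜 E :=
  ((n : 𝕜) + 1)⁻¹ • ∑ k ∈ Finset.range (n + 1), ψ.comp (T ^ k)

variable {T : E →L[𝕜] E} {ψ : StrongDual 𝕜 E}

lemma cesaroMean_apply (n : ℕ) (v : E) :
    cesaroMean T ψ n v = ((n : 𝕜) + 1)⁻¹ * ∑ k ∈ Finset.range (n + 1), ψ ((T ^ k) v) := by
  simp [cesaroMean]

lemma norm_pow_apply_le (hT : ‖T‖ ≤ 1) (k : ℕ) (v : E) : ‖(T ^ k) v‖ ≤ ‖v‖ := by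
  induction k generalizing v with
  | zero => simp
  | succ k ih => exact (ih (T v)).trans (T.le_of_opNorm_le hT v |>.trans_eq (one_mul _))

lemma norm_cesaroMean_le (hT : ‖T‖ ≤ 1) (n : ℕ) : ‖cesaroMean T ψ n‖ ≤ ‖ψ‖ := by
  refine ContinuousLinearMap.opNorm_le_bound _ (norm_nonneg ψ) fun v => ?_
  have hterm (k : ℕ) : ‖ψ ((T ^ k) v)‖ ≤ ‖ψ‖ * ‖v‖ :=
    ψ.le_opNorm_of_le (norm_pow_apply_le hT k v)
  rw [cesaroMean_apply, norm_mul, norm_inv, ← Nat.cast_add_one, RCLike.norm_natCast,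
    inv_mul_le_iff₀ (by positivity)]
  calc ‖∑ k ∈ Finset.range (n + 1), ψ ((T ^ k) v)‖
      ≤ ∑ k ∈ Finset.range (n + 1), ‖ψ‖ * ‖v‖ := norm_sum_le_of_le _ fun k _ => hterm k
    _ = ((n + 1 : ℕ) : ℝ) * (‖ψ‖ * ‖v‖) := by simp

lemma cesaroMean_apply_sub (n : ℕ) (v : E) :
    cesaroMean T ψ n (T v) - cesaroMean T ψ n v
      = ((n : 𝕜) + 1)⁻¹ * (ψ ((T ^ (n + 1)) v) - ψ v) := by
  have hshift (k : ℕ) : (T ^ k) (T v) = (T ^ (k + 1)) v := by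
    rw [pow_succ]; rfl
  have h₁ := Finset.sum_range_succ' (fun k => ψ ((T ^ k) v)) (n + 1)
  have h₂ := Finset.sum_range_succ (fun k => ψ ((T ^ k) v)) (n + 1)
  simp only [pow_zero, one_apply_eq_self] at h₁
  simp only [cesaroMean_apply, hshift]
  linear_combination ((n : 𝕜) + 1)⁻¹ * (h₂ - h₁)

lemma cesaroMean_apply_of_apply_eq_self {v : E} (hv : T v = v) (n : ℕ) :
    cesaroMean T ψ n v = ψ v := by
  have hpow (k : ℕ) : (T ^ k) v = v := by
    induction k with
    | zero => rfl
    | succ k ih => rw [pow_succ', mul_apply_eq_comp, ih, hv]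
  rw [cesaroMean_apply]
  simp only [hpow, Finset.sum_const, Finset.card_range, nsmul_eq_mul]
  push_cast
  field_simp

lemma tendsto_cesaroMean_apply_sub (hT : ‖T‖ ≤ 1) (v : E) :
    Tendsto (fun n => cesaroMean T ψ n (T v) - cesaroMean T ψ n v) atTop (𝓝 0) := by
  simp only [cesaroMean_apply_sub]
  refine squeeze_zero_norm (fun n => ?_)
    (by simpa using tendsto_one_div_add_atTop_nhds_zero_nat.mul_const (2 * (‖ψ‖ * ‖v‖)))
  rw [norm_mul, norm_inv, ← Nat.cast_add_one, RCLike.norm_natCast, Nat.cast_add_one, ← one_div]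
  gcongr
  calc ‖ψ ((T ^ (n + 1)) v) - ψ v‖ ≤ ‖ψ ((T ^ (n + 1)) v)‖ + ‖ψ v‖ := norm_sub_le _ _
    _ ≤ ‖ψ‖ * ‖v‖ + ‖ψ‖ * ‖v‖ :=
        add_le_add (ψ.le_opNorm_of_le (norm_pow_apply_le hT _ v)) (ψ.le_opNorm v)
    _ = 2 * (‖ψ‖ * ‖v‖) := by ring

theorem exists_comp_eq_tendsto_cesaroMean (hT : ‖T‖ ≤ 1) (ψ : StrongDual 𝕜 E) :
    ∃ (m : StrongDual 𝕜 E) (U : Ultrafilter ℕ), ‖m‖ ≤ ‖ψ‖ ∧ m.comp T = m ∧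
      ∀ v, Tendsto (fun n => cesaroMean T ψ n v) (U : Filter ℕ) (𝓝 (m v)) := by
  set U := Ultrafilter.of (atTop : Filter ℕ)
  set c : ℕ → WeakDual 𝕜 E := fun n => WeakDual.toStrongDual.symm (cesaroMean T ψ n)
  have hc : (U.map c : Filter (WeakDual 𝕜 E)) ≤
      𝓟 (WeakDual.toStrongDual ⁻¹' Metric.closedBall 0 ‖ψ‖) := by
    rw [Ultrafilter.coe_map, le_principal_iff]
    exact mem_map.2 <| univ_mem' fun n => by simpa [c] using norm_cesaroMean_le (ψ := ψ) hT n
  -- Banach–Alaoglu: the Cesàro means have a weak-* limit along `U`.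
  obtain ⟨m, hm_norm, hm⟩ := (WeakDual.isCompact_closedBall 0 ‖ψ‖).ultrafilter_le_nhds _ hc
  replace hm : Tendsto c U (𝓝 m) := hm
  have hlim (v : E) : Tendsto (fun n => cesaroMean T ψ n v) (U : Filter ℕ) (𝓝 (m v)) :=
    ((WeakDual.eval_continuous v).tendsto m).comp hm
  refine ⟨WeakDual.toStrongDual m, U, by simpa using hm_norm, ?_, hlim⟩
  ext v
  exact sub_eq_zero.1 (tendsto_nhds_unique ((hlim (T v)).sub (hlim v))
    ((tendsto_cesaroMean_apply_sub hT v).mono_left (Ultrafilter.of_le _)))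

end CesaroMean

section LeftTranslation

variable {S : Type*} [Semigroup S] [MetricSpace S] [ContinuousMul S]

@[simp] lemma lTrans_apply (a : S) (f : S →ᵇ ℂ) (x : S) : lTrans a f x = f (a * x) := rfl

lemma norm_lTrans_le (a : S) (f : S →ᵇ ℂ) : ‖lTrans a f‖ ≤ ‖f‖ :=
  (norm_le (norm_nonneg f)).2 fun x => f.norm_coe_le_norm (a * x)

lemma dist_lTrans_le (a : S) (f g : S →ᵇ ℂ) : dist (lTrans a f) (lTrans a g) ≤ dist f g :=
  (dist_le dist_nonneg).2 fun x => dist_coe_le_dist (a * x)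

lemma isClosed_LUC : IsClosed (LUC S : Set (S →ᵇ ℂ)) := by
  refine isClosed_of_closure_subset fun f hf => ?_
  have hunif : TendstoUniformly (fun g a => lTrans a g) (fun a => lTrans a f) (𝓝 f) :=
    Metric.tendstoUniformly_iff.2 fun ε hε =>
      eventually_of_mem (Metric.ball_mem_nhds f hε) fun g hg a => (dist_lTrans_le a f g).trans_lt
        (Metric.mem_ball'.1 hg)
  exact hunif.continuous (mem_closure_iff_frequently.1 hf)

instance : CompleteSpace (LUC S) := isClosed_LUC.completeSpace_coe

lemma one_mem_LUC : (1 : S →ᵇ ℂ) ∈ LUC S :=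
  (continuous_const (y := (1 : S →ᵇ ℂ))).congr fun _ => rfl

noncomputable instance : One (LUC S) := ⟨⟨1, one_mem_LUC⟩⟩

lemma norm_one_LUC [Nonempty S] : ‖(1 : LUC S)‖ = 1 := norm_one (α := S →ᵇ ℂ)

@[simp] lemma coe_lTransL (a : S) (f : LUC S) : (lTransL a f : S →ᵇ ℂ) = lTrans a f := rfl

lemma norm_lTransL_le (a : S) (f : LUC S) : ‖lTransL a f‖ ≤ ‖f‖ := norm_lTrans_le a f

lemma lTransL_lTransL (a b : S) (f : LUC S) : lTransL b (lTransL a f) = lTransL (a * b) f := by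
  ext x; simp [mul_assoc]

lemma lTransL_add (a : S) (f g : LUC S) : lTransL a (f + g) = lTransL a f + lTransL a g := by
  ext x; simp

lemma lTransL_smul (a : S) (c : ℂ) (f : LUC S) : lTransL a (c • f) = c • lTransL a f := by
  ext x; simp

lemma lTransL_one (a : S) : lTransL a 1 = 1 := by
  ext x; rfl

lemma continuous_lTransL (f : LUC S) : Continuous fun a : S => lTransL a f :=
  f.2.subtype_mk _

noncomputable def lTransLCLM (a : S) : LUC S →L[ℂ] LUC S :=
  LinearMap.mkContinuous
    { toFun := lTransL a
      map_add' := lTransL_add a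
      map_smul' := lTransL_smul a } 1
    fun f => (norm_lTransL_le a f).trans_eq (one_mul _).symm

@[simp] lemma lTransLCLM_apply (a : S) (f : LUC S) : lTransLCLM a f = lTransL a f := rfl

lemma norm_lTransLCLM_le (a : S) : ‖lTransLCLM a‖ ≤ 1 :=
  LinearMap.mkContinuous_norm_le _ zero_le_one _

noncomputable def evalLUC (x : S) : StrongDual ℂ (LUC S) :=
  (BoundedContinuousFunction.evalCLM ℂ x).comp (LUC S).subtypeL

lemma norm_evalLUC_le (x : S) : ‖evalLUC x‖ ≤ 1 :=
  ContinuousLinearMap.opNorm_le_bound _ zero_le_one fun f =>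
    ((f : S →ᵇ ℂ).norm_coe_le_norm x).trans_eq (one_mul _).symm

end LeftTranslation

theorem Continuous.aestronglyMeasurable_of_isTightMeasureSet {X E : Type*} [TopologicalSpace X]
    [T2Space X] [MeasurableSpace X] [OpensMeasurableSpace X] [TopologicalSpace E]
    [TopologicalSpace.PseudoMetrizableSpace E] {μ : Measure X}
    (hμ : IsTightMeasureSet {μ}) {f : X → E} (hf : Continuous f) : AEStronglyMeasurable f μ := by
  rw [isTightMeasureSet_iff_exists_isCompact_measure_compl_le] at hμ
  choose K hK hμK using fun n : ℕ => hμ (n : ℝ≥0∞)⁻¹ (ENNReal.inv_pos.2 (ENNReal.natCast_ne_top n))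
  have hnull : μ (⋃ n, K n)ᶜ = 0 := by
    by_contra hpos
    obtain ⟨n, hn⟩ := ENNReal.exists_inv_nat_lt hpos
    exact lt_irrefl _ ((hn.trans_le (measure_mono
      (Set.compl_subset_compl.2 (Set.subset_iUnion K n)))).trans_le (hμK n μ rfl))
  rw [← Measure.restrict_eq_self_of_ae_mem (mem_ae_iff.2 hnull)]
  exact aestronglyMeasurable_iUnion_iff.2 fun n =>
    hf.continuousOn.aestronglyMeasurable_of_isCompact (hK n) (hK n).measurableSet

section MarkovOperator

variable {S : Type*} [Semigroup S] [MetricSpace S] [ContinuousMul S]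
  [MeasurableSpace S] [BorelSpace S] {π : Measure S} [IsProbabilityMeasure π]

lemma integrable_lTransL (hπ : IsTightMeasureSet {π}) (f : LUC S) :
    Integrable (fun y => lTransL y f) π :=
  .of_bound ((continuous_lTransL f).aestronglyMeasurable_of_isTightMeasureSet hπ) ‖f‖
    (ae_of_all _ fun y => norm_lTransL_le y f)

lemma integral_lTransL_apply (hπ : IsTightMeasureSet {π}) (f : LUC S) (x : S) :
    ((∫ y, lTransL y f ∂π : LUC S) : S →ᵇ ℂ) x = ∫ y, (f : S →ᵇ ℂ) (y * x) ∂π :=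
  ((evalLUC x).integral_comp_comm (integrable_lTransL hπ f)).symm

lemma integral_lTransL_nonneg (hπ : IsTightMeasureSet {π}) {f : LUC S}
    (hf : ∀ x, 0 ≤ (f : S →ᵇ ℂ) x) (x : S) :
    0 ≤ ((∫ y, lTransL y f ∂π : LUC S) : S →ᵇ ℂ) x := by
  rw [integral_lTransL_apply hπ]
  exact integral_nonneg fun y => hf (y * x)

lemma exists_clm_eq_integral_lTransL (hπ : IsTightMeasureSet {π}) :
    ∃ T : LUC S →L[ℂ] LUC S, ‖T‖ ≤ 1 ∧ ∀ f, T f = ∫ y, lTransL y f ∂π := by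
  have hbound (f : LUC S) : ‖∫ y, lTransL y f ∂π‖ ≤ 1 * ‖f‖ := by
    refine (norm_integral_le_of_norm_le_const (μ := π)
      (ae_of_all _ fun y => norm_lTransL_le y f)).trans_eq ?_
    rw [probReal_univ, mul_one, one_mul]
  refine ⟨LinearMap.mkContinuous
    { toFun := fun f => ∫ y, lTransL y f ∂π
      map_add' := fun f g => by
        simp only [lTransL_add]
        exact integral_add (integrable_lTransL hπ f) (integrable_lTransL hπ g)
      map_smul' := fun c f => by
        simp only [lTransL_smul, RingHom.id_apply]
        exact integral_smul c _ } 1 hbound,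
    LinearMap.mkContinuous_norm_le _ zero_le_one _, fun f => rfl⟩

theorem exists_mean_comp_integral_lTransL_eq (hπ : IsTightMeasureSet {π}) (x₀ : S) :
    ∃ m : StrongDual ℂ (LUC S), ‖m‖ ≤ 1 ∧ m 1 = 1 ∧
      (∀ f : LUC S, (∀ x, 0 ≤ (f : S →ᵇ ℂ) x) → 0 ≤ m f) ∧
      ∀ f, m (∫ y, lTransL y f ∂π) = m f := by
  obtain ⟨T, hT_norm, hT⟩ := exists_clm_eq_integral_lTransL hπ
  obtain ⟨m, U, hm_norm, hmT, hm⟩ := exists_comp_eq_tendsto_cesaroMean hT_norm (evalLUC x₀)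
  have hT_one : T 1 = 1 := by
    simp only [hT, lTransL_one, integral_const, probReal_univ, one_smul]
  refine ⟨m, hm_norm.trans (norm_evalLUC_le x₀), ?_, fun f hf => ?_, fun f => ?_⟩
  · refine tendsto_nhds_unique (hm 1) (tendsto_const_nhds.congr fun n => ?_)
    exact (cesaroMean_apply_of_apply_eq_self (ψ := evalLUC x₀) hT_one n).symm
  · have hpow_nonneg (k : ℕ) : ∀ x, 0 ≤ ((T ^ k) f : S →ᵇ ℂ) x := by
      induction k with
      | zero => exact hf
      | succ k ih =>
        rw [pow_succ', mul_apply_eq_comp, hT]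
        exact integral_lTransL_nonneg hπ ih
    refine ge_of_tendsto' (hm f) fun n => ?_
    rw [cesaroMean_apply]
    exact mul_nonneg (by positivity) (Finset.sum_nonneg fun k _ => hpow_nonneg k x₀)
  · rw [← hT, ← ContinuousLinearMap.comp_apply, hmT]

end MarkovOperator

section TranslateMean

variable {S : Type*} [Semigroup S] [MetricSpace S] [ContinuousMul S]

noncomputable def translateMean (m : StrongDual ℂ (LUC S)) : LUC S →L[ℂ] (S →ᵇ ℂ) :=
  LinearMap.mkContinuous
    { toFun := fun f => ofNormedAddCommGroup (fun x => m (lTransL x f))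
        (m.continuous.comp (continuous_lTransL f)) (‖m‖ * ‖f‖)
        fun x => m.le_opNorm_of_le (norm_lTransL_le x f)
      map_add' := fun f g => by
        ext x; exact (congrArg m (lTransL_add x f g)).trans (m.map_add _ _)
      map_smul' := fun c f => by
        ext x; exact (congrArg m (lTransL_smul x c f)).trans (m.map_smul c _) }
    ‖m‖ fun f => norm_ofNormedAddCommGroup_le _ (mul_nonneg (norm_nonneg m) (norm_nonneg f))
      fun x => m.le_opNorm_of_le (norm_lTransL_le x f)

@[simp] lemma translateMean_apply (m : StrongDual ℂ (LUC S)) (f : LUC S) (x : S) :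
    translateMean m f x = m (lTransL x f) := by
  rw [translateMean, LinearMap.mkContinuous_apply]; rfl

lemma lTrans_translateMean (m : StrongDual ℂ (LUC S)) (a : S) (f : LUC S) :
    lTrans a (translateMean m f) = translateMean m (lTransL a f) := by
  ext x
  rw [lTrans_apply, translateMean_apply, translateMean_apply, lTransL_lTransL]

lemma translateMean_mem_LUC (m : StrongDual ℂ (LUC S)) (f : LUC S) :
    translateMean m f ∈ LUC S := by
  change Continuous fun a => lTrans a (translateMean m f)
  simp only [lTrans_translateMean]
  exact (translateMean m).continuous.comp (continuous_lTransL f)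

lemma integral_translateMean_mul [MeasurableSpace S] [BorelSpace S] {π : Measure S}
    [IsProbabilityMeasure π] (hπ : IsTightMeasureSet {π}) {m : StrongDual ℂ (LUC S)}
    (hm : ∀ f, m (∫ y, lTransL y f ∂π) = m f) (f : LUC S) (x : S) :
    ∫ y, translateMean m f (x * y) ∂π = translateMean m f x := by
  calc ∫ y, translateMean m f (x * y) ∂π
      = ∫ y, m (lTransL y (lTransL x f)) ∂π := by simp_rw [translateMean_apply, lTransL_lTransL]
    _ = m (∫ y, lTransL y (lTransL x f) ∂π) :=
        m.integral_comp_comm (integrable_lTransL hπ (lTransL x f))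
    _ = translateMean m f x := by rw [hm, translateMean_apply]

end TranslateMean

/-- **Liouville property implies amenability for metric semigroups.**
If `S` is a metric semigroup and `π` is a tight Borel probability measure on `S` such that
every `π`-harmonic function in `LUC S` is constant, then `S` is amenable: there is a
norm-one positive linear functional `φ` on `LUC S` with `φ (δ_a * f) = φ f` for all
`a ∈ S` and `f ∈ LUC S`. -/
theorem liouville_implies_amenable_metric_semigroup
    {S : Type*} [Semigroup S] [MetricSpace S] [ContinuousMul S]
    [MeasurableSpace S] [BorelSpace S]
    (π : Measure S) [IsProbabilityMeasure π]
    (htight : ∀ ε : ℝ≥0∞, 0 < ε → ∃ K : Set S, IsCompact K ∧ π Kᶜ < ε)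
    (hLiou : ∀ f : S →ᵇ ℂ, f ∈ LUC S →
      (∀ x : S, ∫ y, f (x * y) ∂π = f x) → ∃ c : ℂ, ∀ x : S, f x = c) :
    ∃ φ : LUC S →L[ℂ] ℂ, ‖φ‖ = 1 ∧
      (∀ f : LUC S, (∀ x : S, ∃ r : ℝ, 0 ≤ r ∧ (f : S →ᵇ ℂ) x = r) →
        ∃ r : ℝ, 0 ≤ r ∧ φ f = r) ∧
      (∀ (a : S) (f : LUC S), φ (lTransL a f) = φ f) := by
  have hπ : IsTightMeasureSet {π} :=
    isTightMeasureSet_iff_exists_isCompact_measure_compl_le.2 fun ε hε => by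
      obtain ⟨K, hK, hπK⟩ := htight ε hε
      exact ⟨K, hK, fun μ hμ => Set.mem_singleton_iff.1 hμ ▸ hπK.le⟩
  obtain ⟨x₀⟩ := nonempty_of_isProbabilityMeasure π
  obtain ⟨m, hm_norm, hm_one, hm_nonneg, hm_inv⟩ := exists_mean_comp_integral_lTransL_eq hπ x₀
  refine ⟨m.comp (lTransLCLM x₀), le_antisymm ?_ ?_, fun f hf => ?_, fun a f => ?_⟩
  · exact (m.opNorm_comp_le _).trans (mul_le_one₀ hm_norm (norm_nonneg _) (norm_lTransLCLM_le x₀))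
  · have : Nonempty S := ⟨x₀⟩
    have h := (m.comp (lTransLCLM x₀)).le_opNorm 1
    rwa [ContinuousLinearMap.comp_apply, lTransLCLM_apply, lTransL_one, hm_one, norm_one,
      norm_one_LUC, mul_one] at h
  · have hf' (x : S) : 0 ≤ (lTransL x₀ f : S →ᵇ ℂ) x := by
      obtain ⟨r, hr, hfr⟩ := hf (x₀ * x)
      exact RCLike.nonneg_iff_exists_ofReal.2 ⟨r, hr, hfr.symm⟩
    obtain ⟨r, hr, hmr⟩ := RCLike.nonneg_iff_exists_ofReal.1 (hm_nonneg _ hf')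
    exact ⟨r, hr, hmr.symm⟩
  · obtain ⟨c, hc⟩ := hLiou _ (translateMean_mem_LUC m f) (integral_translateMean_mul hπ hm_inv f)
    change m (lTransL x₀ (lTransL a f)) = m (lTransL x₀ f)
    rw [lTransL_lTransL]
    simpa only [translateMean_apply] using (hc (a * x₀)).trans (hc x₀).symm
end

section
/- Let S be a σ-compact metric semigroup with identity satisfying Reiter's condition. Then S has the Liouville property for some tight probability measure: there exists a tight Borel probability measure π on S such that every π-harmonic function in LUC(S) is constant. -/
open MeasureTheory BoundedContinuousFunction Filter Topology
open scoped ENNReal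

/-- The total variation norm `‖μ - ν‖` of the difference of two (finite) measures. -/
noncomputable def tvDist {α : Type*} [MeasurableSpace α] (μ ν : Measure α) : ℝ≥0∞ :=
  (⨆ (E : Set α) (_ : MeasurableSet E), (μ E - ν E)) +
    ⨆ (E : Set α) (_ : MeasurableSet E), (ν E - μ E)

/-- A finite Borel measure is tight if all but `ε` of its mass sits in a compact set. -/
def IsTightMeas {S : Type*} [TopologicalSpace S] [MeasurableSpace S] (μ : Measure S) : Prop :=
  ∀ ε : ℝ≥0∞, 0 < ε → ∃ K : Set S, IsCompact K ∧ μ Kᶜ < ε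

/-- Reiter's condition for a topological semigroup. -/
def ReiterCond (S : Type*) [Semigroup S] [MetricSpace S] [ContinuousMul S]
    [MeasurableSpace S] : Prop :=
  ∀ ε : ℝ, 0 < ε → ∀ K : Set S, IsCompact K →
    ∃ θ : Measure S, IsProbabilityMeasure θ ∧ (∃ C : Set S, IsCompact C ∧ θ Cᶜ = 0) ∧
      ∀ s ∈ K, tvDist θ (Measure.map (fun y => s * y) θ) < ENNReal.ofReal ε

/-! Reiter's condition provides, stage by stage, probability measures `θ n` that are almost
invariant under left translation by a compact set `K n`, where `K (n + 1) ⊇ K n * K n` also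
carries `θ n` and the sets `K n` exhaust `S`. Let `π = ∑ₖ θ k / ((k + 1) (k + 2))` and
`f = f * π`. For `u, u' ∈ K n`, the stages `k ≥ n` carry total weight `1/(n+1)` and, by almost
invariance, contribute at most `‖f‖/(n+1)²` to `‖f u - f u'‖`, while the stages `k < n` move
`u, u'` to points `u y, u' y` of `K (n + 1)`. After `m` such steps the mass still at bad stages is
`∏_{i<m} (1 - 1/(n+1+i)) = n/(n+m) → 0`, because the tails `1/(n+1)` of the weights are not
summable. Hence the oscillation of `f` on `K n` is at most `‖f‖/(n+1)`, and `f` is constant. -/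

open scoped Pointwise
open Set

section TotalVariation

variable {α : Type*} [MeasurableSpace α] {μ ν : Measure α} {e : ℝ}

lemma tvDist_comm (μ ν : Measure α) : tvDist μ ν = tvDist ν μ := add_comm _ _

lemma measureReal_sub_measureReal_le_of_tvDist_le [IsFiniteMeasure ν] (he : 0 ≤ e)
    (h : tvDist μ ν ≤ ENNReal.ofReal e) {E : Set α} (hE : MeasurableSet E) :
    μ.real E - ν.real E ≤ e := by
  have hle : μ E - ν E ≤ ENNReal.ofReal e :=
    le_trans (le_iSup₂ (f := fun (E : Set α) (_ : MeasurableSet E) => μ E - ν E) E hE)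
      (le_self_add.trans h)
  have := ENNReal.toReal_mono (by finiteness) (tsub_le_iff_left.mp hle)
  rw [ENNReal.toReal_add (by finiteness) (by finiteness), ENNReal.toReal_ofReal he] at this
  simp only [measureReal_def]
  linarith

lemma integrableOn_measureReal_setOf_le (ρ : Measure α) [IsFiniteMeasure ρ] (g : α → ℝ)
    (s : Set ℝ) (hs : volume s ≠ ⊤) : IntegrableOn (fun t => ρ.real {x | t ≤ g x}) s := by
  have hmeas : Measurable fun t => ρ.real {x | t ≤ g x} :=
    (Antitone.measurable (f := fun t => ρ {x | t ≤ g x}) fun _ _ hst =>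
        measure_mono fun _ h => hst.trans h).ennreal_toReal
  exact Measure.integrableOn_of_bounded (M := ρ.real univ) hs hmeas.aestronglyMeasurable
    (Eventually.of_forall fun t => by
      rw [Real.norm_eq_abs, abs_of_nonneg measureReal_nonneg]
      exact measureReal_mono (subset_univ _))

/-- Layer cake: both integrals are integrals over `t ∈ (0, M]` of the masses of `{t ≤ g}`. -/
lemma integral_sub_integral_le_of_tvDist_le [IsFiniteMeasure μ] [IsFiniteMeasure ν]
    (he : 0 ≤ e) (h : tvDist μ ν ≤ ENNReal.ofReal e) {g : α → ℝ} (hg : Measurable g) {M : ℝ}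
    (hM : 0 ≤ M) (hg0 : ∀ x, 0 ≤ g x) (hgM : ∀ x, g x ≤ M) :
    ∫ x, g x ∂μ - ∫ x, g x ∂ν ≤ M * e := by
  have layer : ∀ ρ : Measure α, IsFiniteMeasure ρ →
      ∫ x, g x ∂ρ = ∫ t in Ioc 0 M, ρ.real {x | t ≤ g x} := fun ρ _ =>
    Integrable.integral_eq_integral_Ioc_meas_le
      (Integrable.of_bound hg.aestronglyMeasurable M (Eventually.of_forall fun x => by
        rw [Real.norm_eq_abs, abs_of_nonneg (hg0 x)]; exact hgM x))
      (Eventually.of_forall hg0) (Eventually.of_forall hgM)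
  have hint := fun (ρ : Measure α) [IsFiniteMeasure ρ] =>
    integrableOn_measureReal_setOf_le ρ g (Ioc 0 M) measure_Ioc_lt_top.ne
  rw [layer μ ‹_›, layer ν ‹_›, ← integral_sub (hint μ) (hint ν)]
  calc ∫ t in Ioc 0 M, (μ.real {x | t ≤ g x} - ν.real {x | t ≤ g x})
      ≤ ∫ _ in Ioc 0 M, e :=
        setIntegral_mono_on ((hint μ).sub (hint ν)) (integrableOn_const measure_Ioc_lt_top.ne)
          measurableSet_Ioc fun t _ =>
          measureReal_sub_measureReal_le_of_tvDist_le he h (measurableSet_le measurable_const hg)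
    _ = M * e := by simp [hM]

lemma abs_integral_sub_integral_le_of_tvDist_le [IsProbabilityMeasure μ]
    [IsProbabilityMeasure ν] (he : 0 ≤ e) (h : tvDist μ ν ≤ ENNReal.ofReal e) {g : α → ℝ}
    (hg : Measurable g) {M : ℝ} (hgM : ∀ x, |g x| ≤ M) :
    |∫ x, g x ∂μ - ∫ x, g x ∂ν| ≤ 2 * M * e := by
  have hM : 0 ≤ M := by
    obtain ⟨x⟩ : Nonempty α := nonempty_of_isProbabilityMeasure μ
    exact (abs_nonneg _).trans (hgM x)
  have shift : ∀ ρ : Measure α, IsProbabilityMeasure ρ →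
      ∫ x, (g x + M) ∂ρ = ∫ x, g x ∂ρ + M := fun ρ _ => by
    rw [integral_add (Integrable.of_bound hg.aestronglyMeasurable M
      (Eventually.of_forall hgM)) (integrable_const M)]
    simp
  have one_sided : ∀ (ρ₁ ρ₂ : Measure α) [IsProbabilityMeasure ρ₁] [IsProbabilityMeasure ρ₂],
      tvDist ρ₁ ρ₂ ≤ ENNReal.ofReal e → ∫ x, g x ∂ρ₁ - ∫ x, g x ∂ρ₂ ≤ 2 * M * e := by
    intro ρ₁ ρ₂ _ _ h
    have := integral_sub_integral_le_of_tvDist_le he h (hg.add_const M) (M := 2 * M)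
      (by positivity)
      (fun x => by linarith [neg_abs_le (g x), hgM x])
      (fun x => by linarith [le_abs_self (g x), hgM x])
    rw [shift ρ₁ ‹_›, shift ρ₂ ‹_›] at this
    linarith
  rw [abs_sub_le_iff]
  exact ⟨one_sided μ ν h, one_sided ν μ (tvDist_comm μ ν ▸ h)⟩

lemma norm_integral_sub_integral_le_of_tvDist_le [IsProbabilityMeasure μ]
    [IsProbabilityMeasure ν] (he : 0 ≤ e) (h : tvDist μ ν ≤ ENNReal.ofReal e) {f : α → ℂ}
    (hf : Measurable f) {M : ℝ} (hfM : ∀ x, ‖f x‖ ≤ M) :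
    ‖∫ x, f x ∂μ - ∫ x, f x ∂ν‖ ≤ 4 * M * e := by
  have hint : ∀ ρ : Measure α, IsProbabilityMeasure ρ → Integrable f ρ := fun ρ _ =>
    Integrable.of_bound hf.aestronglyMeasurable M (Eventually.of_forall hfM)
  have hre := abs_integral_sub_integral_le_of_tvDist_le he h (Complex.measurable_re.comp hf)
    fun x => (Complex.abs_re_le_norm (f x)).trans (hfM x)
  have him := abs_integral_sub_integral_le_of_tvDist_le he h (Complex.measurable_im.comp hf)
    fun x => (Complex.abs_im_le_norm (f x)).trans (hfM x)
  simp only [Function.comp_apply, ← RCLike.re_to_complex, ← RCLike.im_to_complex,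
    integral_re (hint μ ‹_›), integral_re (hint ν ‹_›), integral_im (hint μ ‹_›),
    integral_im (hint ν ‹_›)] at hre him
  simp only [RCLike.re_to_complex, RCLike.im_to_complex] at hre him
  calc ‖∫ x, f x ∂μ - ∫ x, f x ∂ν‖
      ≤ |(∫ x, f x ∂μ - ∫ x, f x ∂ν).re| + |(∫ x, f x ∂μ - ∫ x, f x ∂ν).im| :=
        Complex.norm_le_abs_re_add_abs_im _
    _ ≤ 4 * M * e := by
        rw [Complex.sub_re, Complex.sub_im]
        linarith

end TotalVariation

lemma BoundedContinuousFunction.integrable_apply_const_mul {S : Type*} [Mul S]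
    [TopologicalSpace S] [ContinuousMul S] [MeasurableSpace S] [OpensMeasurableSpace S]
    (f : S →ᵇ ℂ) (x : S) (μ : Measure S) [IsFiniteMeasure μ] :
    Integrable (fun y => f (x * y)) μ :=
  (f.compContinuous ⟨_, continuous_const_mul x⟩).integrable μ

-- The tolerance `1/(8(n+1))` makes the `θ n`-averages of `f (u * ·)` and `f (u' * ·)` differ by at
-- most `‖f‖/(n+1)` (`norm_integral_mul_sub_integral_mul_le`).
structure ReiterSequence (S : Type*) [Monoid S] [TopologicalSpace S] [MeasurableSpace S] where
  K : ℕ → Set S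
  θ : ℕ → Measure S
  isCompact_K : ∀ n, IsCompact (K n)
  one_mem_K : ∀ n, (1 : S) ∈ K n
  mul_subset_K : ∀ n, K n * K n ⊆ K (n + 1)
  exists_mem_K : ∀ x : S, ∃ n, x ∈ K n
  isProbabilityMeasure_θ : ∀ n, IsProbabilityMeasure (θ n)
  ae_mem_K : ∀ n, ∀ᵐ y ∂θ n, y ∈ K (n + 1)
  tvDist_map_mul_lt : ∀ n, ∀ s ∈ K n,
    tvDist (θ n) ((θ n).map (s * ·)) < ENNReal.ofReal (1 / (8 * (n + 1)))

namespace ReiterSequence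

noncomputable def weight (k : ℕ) : ℝ := 1 / ((k + 1) * (k + 2))

lemma weight_nonneg (k : ℕ) : 0 ≤ weight k := by unfold weight; positivity

lemma sum_range_weight (n : ℕ) : ∑ k ∈ Finset.range n, weight k = 1 - 1 / (n + 1) := by
  induction n with
  | zero => simp
  | succ n ih =>
    rw [Finset.sum_range_succ, ih, weight]
    push_cast
    field_simp
    ring

lemma hasSum_weight : HasSum weight 1 := by
  refine (hasSum_iff_tendsto_nat_of_nonneg weight_nonneg 1).mpr ?_
  simp only [sum_range_weight]
  simpa using tendsto_one_div_add_atTop_nhds_zero_nat.const_sub (1 : ℝ)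

lemma hasSum_weight_mul_ite (n : ℕ) (B c : ℝ) :
    HasSum (fun k => weight k * if k < n then B else c) ((1 - 1 / (n + 1)) * B + c / (n + 1)) := by
  have hfin : HasSum (fun k => if k < n then weight k * (B - c) else 0)
      ((1 - 1 / (n + 1)) * (B - c)) := by
    have : HasSum (fun k => if k < n then weight k * (B - c) else 0)
        (∑ k ∈ Finset.range n, if k < n then weight k * (B - c) else 0) :=
      hasSum_sum_of_ne_finset_zero fun k hk => by simp_all
    rwa [Finset.sum_congr rfl fun k hk => if_pos (Finset.mem_range.mp hk), ← Finset.sum_mul,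
      sum_range_weight] at this
  have hsplit : (fun k => weight k * if k < n then B else c) =
      fun k => weight k * c + if k < n then weight k * (B - c) else 0 := by
    ext k; split_ifs <;> ring
  rw [hsplit, show (1 - 1 / (n + 1)) * B + c / (n + 1) = 1 * c + (1 - 1 / (n + 1)) * (B - c) by
    field_simp; ring]
  exact (hasSum_weight.mul_right c).add hfin

lemma norm_le_of_hasSum_weight_smul {E : Type*} [SeminormedAddCommGroup E] [NormedSpace ℝ E]
    {a : ℕ → E} {s : E} (ha : HasSum (fun k => weight k • a k) s) {n : ℕ} {B c : ℝ}
    (hB : ∀ k < n, ‖a k‖ ≤ B) (hc : ∀ k, n ≤ k → ‖a k‖ ≤ c) :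
    ‖s‖ ≤ (1 - 1 / (n + 1)) * B + c / (n + 1) := by
  refine ha.norm_le_of_bounded (hasSum_weight_mul_ite n B c) fun k => ?_
  rw [norm_smul, Real.norm_of_nonneg (weight_nonneg k)]
  refine mul_le_mul_of_nonneg_left ?_ (weight_nonneg k)
  split_ifs with hk
  · exact hB k hk
  · exact hc k (not_lt.mp hk)

-- `2 (n + 1) / (n + 1 + m) ≥ 2 n / (n + m)` accounts for the mass still at bad stages after `m`
-- steps, `1 / (n + 1)` for the almost-invariance errors.
noncomputable def oscBound (m n : ℕ) : ℝ := 2 * (n + 1) / (n + 1 + m) + 1 / (n + 1)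

lemma two_le_oscBound_zero (n : ℕ) : 2 ≤ oscBound 0 n := by
  rw [oscBound, Nat.cast_zero, add_zero, mul_div_cancel_right₀ _ (by positivity)]
  have : (0 : ℝ) ≤ 1 / (n + 1) := by positivity
  linarith

lemma oscBound_recursion (m n : ℕ) :
    (1 - 1 / (n + 1)) * oscBound m (n + 1) + 1 / (n + 1) / (n + 1) ≤ oscBound (m + 1) n := by
  unfold oscBound
  push_cast
  have hn : (0 : ℝ) ≤ n := n.cast_nonneg
  have hm : (0 : ℝ) ≤ m := m.cast_nonneg
  field_simp
  ring_nf
  nlinarith [mul_nonneg hn hm, mul_nonneg (mul_nonneg hn hn) hm, mul_nonneg hn hn]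

lemma tendsto_oscBound (n : ℕ) :
    Tendsto (fun m => oscBound m n) atTop (𝓝 (1 / (n + 1))) := by
  have : Tendsto (fun m : ℕ => 2 * ((n : ℝ) + 1) / (n + 1 + m)) atTop (𝓝 0) :=
    tendsto_const_nhds.div_atTop
      (tendsto_atTop_add_const_left _ _ tendsto_natCast_atTop_atTop)
  simpa [oscBound] using this.add_const (1 / ((n : ℝ) + 1))

variable {S : Type*} [Monoid S] [TopologicalSpace S] [MeasurableSpace S] (R : ReiterSequence S)

instance (n : ℕ) : IsProbabilityMeasure (R.θ n) := R.isProbabilityMeasure_θ n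

lemma K_mono : Monotone R.K :=
  monotone_nat_of_le_succ fun n u hu => R.mul_subset_K n ⟨u, hu, 1, R.one_mem_K n, mul_one u⟩

lemma ae_forall_mul_mem_K {k n : ℕ} (hk : k < n) :
    ∀ᵐ y ∂(R.θ k), ∀ u ∈ R.K n, u * y ∈ R.K (n + 1) := by
  filter_upwards [R.ae_mem_K k] with y hy u hu
  exact R.mul_subset_K n ⟨u, hu, y, R.K_mono (Nat.succ_le_of_lt hk) hy, rfl⟩

noncomputable def mixture : Measure S :=
  Measure.sum fun k => ENNReal.ofReal (weight k) • R.θ k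

instance : IsProbabilityMeasure R.mixture := by
  constructor
  simp only [mixture, Measure.sum_apply _ MeasurableSet.univ, Measure.smul_apply, measure_univ,
    smul_eq_mul, mul_one]
  rw [← ENNReal.ofReal_tsum_of_nonneg weight_nonneg hasSum_weight.summable,
    hasSum_weight.tsum_eq, ENNReal.ofReal_one]

lemma mixture_compl_K_le [T2Space S] [OpensMeasurableSpace S] (n : ℕ) :
    R.mixture (R.K n)ᶜ ≤ ENNReal.ofReal (1 / (n + 1)) := by
  have hK : MeasurableSet (R.K n)ᶜ := (R.isCompact_K n).measurableSet.compl
  have hterm : ∀ k, ENNReal.ofReal (weight k) * R.θ k (R.K n)ᶜ ≤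
      ENNReal.ofReal (weight k * if k < n then 0 else 1) := fun k => by
    split_ifs with hk
    · have : R.θ k (R.K n)ᶜ = 0 := measure_mono_null
        (compl_subset_compl.mpr (R.K_mono (Nat.succ_le_of_lt hk))) (ae_iff.mp (R.ae_mem_K k))
      simp [this]
    · simpa using mul_le_of_le_one_right' prob_le_one
  have hsum := hasSum_weight_mul_ite n 0 1
  rw [mul_zero, zero_add] at hsum
  calc R.mixture (R.K n)ᶜ = ∑' k, ENNReal.ofReal (weight k) * R.θ k (R.K n)ᶜ := by
        simp only [mixture, Measure.sum_apply _ hK, Measure.smul_apply, smul_eq_mul]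
    _ ≤ ∑' k, ENNReal.ofReal (weight k * if k < n then 0 else 1) := ENNReal.tsum_le_tsum hterm
    _ = ENNReal.ofReal (1 / (n + 1)) := by
        rw [← ENNReal.ofReal_tsum_of_nonneg (fun k => by split_ifs <;> simp [weight_nonneg])
          hsum.summable, hsum.tsum_eq]

lemma isTight_mixture [T2Space S] [OpensMeasurableSpace S] : IsTightMeas R.mixture := by
  intro ε hε
  obtain ⟨r, -, hr0, hrε⟩ := ENNReal.lt_iff_exists_real_btwn.mp hε
  obtain ⟨n, hn⟩ := exists_nat_one_div_lt (ENNReal.ofReal_pos.mp hr0)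
  exact ⟨R.K n, R.isCompact_K n, (R.mixture_compl_K_le n).trans_lt
    ((ENNReal.ofReal_lt_ofReal_iff (ENNReal.ofReal_pos.mp hr0)).mpr hn |>.trans hrε)⟩

lemma hasSum_integral_mixture {E : Type*} [NormedAddCommGroup E] [NormedSpace ℝ E] {g : S → E}
    (hg : Integrable g R.mixture) :
    HasSum (fun k => weight k • ∫ y, g y ∂(R.θ k)) (∫ y, g y ∂(R.mixture)) := by
  have := hasSum_integral_measure hg
  simp only [integral_smul_measure, ENNReal.toReal_ofReal (weight_nonneg _)] at this
  exact this

section Harmonic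

variable [ContinuousMul S] [BorelSpace S] (f : S →ᵇ ℂ)

lemma norm_integral_mul_sub_integral_le {n : ℕ} {s : S} (hs : s ∈ R.K n) :
    ‖∫ y, f (s * y) ∂(R.θ n) - ∫ y, f y ∂(R.θ n)‖ ≤ ‖f‖ / (2 * (n + 1)) := by
  have hmul : Measurable (s * · : S → S) := (continuous_const.mul continuous_id).measurable
  have := Measure.isProbabilityMeasure_map (μ := R.θ n) hmul.aemeasurable
  rw [← integral_map hmul.aemeasurable f.continuous.aestronglyMeasurable]
  calc _ ≤ 4 * ‖f‖ * (1 / (8 * (n + 1))) :=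
        norm_integral_sub_integral_le_of_tvDist_le (by positivity)
          (tvDist_comm (R.θ n) _ ▸ (R.tvDist_map_mul_lt n s hs).le) f.continuous.measurable
          f.norm_coe_le_norm
    _ = ‖f‖ / (2 * (n + 1)) := by field_simp; ring

lemma norm_integral_mul_sub_integral_mul_le {k n : ℕ} (hnk : n ≤ k) {u u' : S}
    (hu : u ∈ R.K n) (hu' : u' ∈ R.K n) :
    ‖∫ y, f (u * y) ∂(R.θ k) - ∫ y, f (u' * y) ∂(R.θ k)‖ ≤ ‖f‖ / (k + 1) :=
  calc _ ≤ ‖∫ y, f (u * y) ∂(R.θ k) - ∫ y, f y ∂(R.θ k)‖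
          + ‖∫ y, f y ∂(R.θ k) - ∫ y, f (u' * y) ∂(R.θ k)‖ :=
        norm_sub_le_norm_sub_add_norm_sub ..
    _ ≤ ‖f‖ / (2 * (k + 1)) + ‖f‖ / (2 * (k + 1)) :=
        add_le_add (R.norm_integral_mul_sub_integral_le f (R.K_mono hnk hu))
          (norm_sub_rev (E := ℂ) .. ▸ R.norm_integral_mul_sub_integral_le f (R.K_mono hnk hu'))
    _ = ‖f‖ / (k + 1) := by field_simp; ring

variable {f} (hf : ∀ x, ∫ y, f (x * y) ∂(R.mixture) = f x)
include hf

lemma hasSum_integral_mul (x : S) :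
    HasSum (fun k => weight k • ∫ y, f (x * y) ∂(R.θ k)) (f x) :=
  hf x ▸ R.hasSum_integral_mixture (f.integrable_apply_const_mul x _)

lemma norm_sub_le_of_forall_norm_sub_le {n : ℕ} {B : ℝ}
    (hB : ∀ v ∈ R.K (n + 1), ∀ v' ∈ R.K (n + 1), ‖f v - f v'‖ ≤ B) {u u' : S}
    (hu : u ∈ R.K n) (hu' : u' ∈ R.K n) :
    ‖f u - f u'‖ ≤ (1 - 1 / (n + 1)) * B + ‖f‖ / (n + 1) / (n + 1) := by
  have hsum := (R.hasSum_integral_mul hf u).sub (R.hasSum_integral_mul hf u')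
  simp only [← smul_sub] at hsum
  refine norm_le_of_hasSum_weight_smul hsum (fun k hk => ?_) fun k hk => ?_
  · rw [← integral_sub (f.integrable_apply_const_mul u _) (f.integrable_apply_const_mul u' _)]
    have := norm_integral_le_of_norm_le_const (μ := R.θ k) (C := B)
      (by filter_upwards [R.ae_forall_mul_mem_K hk] with y hy
            using hB _ (hy u hu) _ (hy u' hu'))
    simpa using this
  · exact (R.norm_integral_mul_sub_integral_mul_le f hk hu hu').trans
      (div_le_div_of_nonneg_left (norm_nonneg f) (by positivity) (by exact_mod_cast by omega))

lemma norm_sub_le_mul_oscBound (m : ℕ) :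
    ∀ n, ∀ u ∈ R.K n, ∀ u' ∈ R.K n, ‖f u - f u'‖ ≤ ‖f‖ * oscBound m n := by
  induction m with
  | zero =>
    intro n u _ u' _
    calc ‖f u - f u'‖ ≤ ‖f‖ * 2 := by
          linarith [norm_sub_le (f u) (f u'), f.norm_coe_le_norm u, f.norm_coe_le_norm u']
      _ ≤ ‖f‖ * oscBound 0 n :=
          mul_le_mul_of_nonneg_left (two_le_oscBound_zero n) (norm_nonneg f)
  | succ m ih =>
    intro n u hu u' hu'
    calc ‖f u - f u'‖
        ≤ (1 - 1 / (n + 1)) * (‖f‖ * oscBound m (n + 1)) + ‖f‖ / (n + 1) / (n + 1) :=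
          R.norm_sub_le_of_forall_norm_sub_le hf (by exact_mod_cast ih (n + 1)) hu hu'
      _ = ‖f‖ * ((1 - 1 / (n + 1)) * oscBound m (n + 1) + 1 / (n + 1) / (n + 1)) := by ring
      _ ≤ ‖f‖ * oscBound (m + 1) n :=
          mul_le_mul_of_nonneg_left (oscBound_recursion m n) (norm_nonneg f)

lemma norm_sub_le_of_mem_K {n : ℕ} {u u' : S} (hu : u ∈ R.K n) (hu' : u' ∈ R.K n) :
    ‖f u - f u'‖ ≤ ‖f‖ * (1 / (n + 1)) :=
  ge_of_tendsto' ((tendsto_oscBound n).const_mul ‖f‖) fun m =>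
    R.norm_sub_le_mul_oscBound hf m n u hu u' hu'

theorem apply_eq_apply_one (x : S) : f x = f 1 := by
  obtain ⟨n₀, hx⟩ := R.exists_mem_K x
  have hlim : Tendsto (fun n : ℕ => ‖f‖ * (1 / ((n : ℝ) + 1))) atTop (𝓝 0) := by
    simpa using tendsto_one_div_add_atTop_nhds_zero_nat.const_mul ‖f‖
  have : ‖f x - f 1‖ ≤ 0 := ge_of_tendsto hlim <| eventually_atTop.mpr ⟨n₀, fun n hn =>
    R.norm_sub_le_of_mem_K hf (R.K_mono hn hx) (R.one_mem_K n)⟩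
  exact sub_eq_zero.mp (norm_le_zero_iff.mp this)

end Harmonic

end ReiterSequence

/-- Choose `θ n` by Reiter's condition for `K n`, then enlarge `K n` by its square, a compact set
carrying `θ n`, and the `n`-th piece of a compact exhaustion of `S`. -/
theorem ReiterCond.nonempty_reiterSequence {S : Type*} [Monoid S] [MetricSpace S]
    [ContinuousMul S] [SigmaCompactSpace S] [MeasurableSpace S] (hR : ReiterCond S) :
    Nonempty (ReiterSequence S) := by
  choose θ hθ hθsupp hθinv using fun (n : ℕ) (K : {K : Set S // IsCompact K}) =>
    hR (1 / (8 * (n + 1))) (by positivity) K K.2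
  choose C hC hθC using hθsupp
  let K : ℕ → {K : Set S // IsCompact K} := fun n => Nat.rec ⟨{1}, isCompact_singleton⟩
    (fun n Kn => ⟨Kn.1 * Kn.1 ∪ C n Kn ∪ compactCovering S n,
      ((Kn.2.mul Kn.2).union (hC n Kn)).union (isCompact_compactCovering S n)⟩) n
  have hK (n : ℕ) : (K (n + 1)).1 = (K n).1 * (K n).1 ∪ C n (K n) ∪ compactCovering S n := rfl
  have one_mem (n : ℕ) : (1 : S) ∈ (K n).1 := by
    induction n with
    | zero => exact rfl
    | succ n ih => exact hK n ▸ Or.inl (Or.inl ⟨1, ih, 1, ih, one_mul 1⟩)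
  refine ⟨⟨fun n => (K n).1, fun n => θ n (K n), fun n => (K n).2, one_mem, fun n => ?_,
    fun x => ?_, fun n => hθ n (K n), fun n => ?_, fun n => hθinv n (K n)⟩⟩
  · exact hK n ▸ subset_union_left.trans subset_union_left
  · obtain ⟨n, hn⟩ := exists_mem_compactCovering x
    exact ⟨n + 1, hK n ▸ Or.inr hn⟩
  · exact mem_of_superset (mem_ae_iff.mpr (hθC n (K n)))
      (hK n ▸ subset_union_right.trans subset_union_left)

/-- **Reiter's condition implies the Liouville property for σ-compact metric semigroups
with identity**: there is a tight Borel probability measure `π` such that every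
`π`-harmonic function in `LUC S` is constant. -/
theorem reiter_implies_liouville_metric_monoid
    {S : Type*} [Monoid S] [MetricSpace S] [ContinuousMul S] [SigmaCompactSpace S]
    [MeasurableSpace S] [BorelSpace S]
    (hR : ReiterCond S) :
    ∃ π : Measure S, IsProbabilityMeasure π ∧ IsTightMeas π ∧
      ∀ f : S →ᵇ ℂ, f ∈ LUC S →
        (∀ x : S, ∫ y, f (x * y) ∂π = f x) → ∃ c : ℂ, ∀ x : S, f x = c := by
  obtain ⟨R⟩ := hR.nonempty_reiterSequence
  exact ⟨R.mixture, inferInstance, R.isTight_mixture,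
    fun f _ hf => ⟨f 1, R.apply_eq_apply_one hf⟩⟩
end

section
/- Let S be a semigroup with identity which admits a central series. Then for every non-degenerate probability measure π on S, every bounded π-harmonic function f : S → ℂ is constant. -/
/-!
Real and imaginary parts of `f` are again bounded and harmonic, so consider a bounded real
harmonic `h`. Going up the central series one shows `h (x * u * w) = h (x * w)` for `u ∈ T m`.
For `a ∈ T (m + 1)` the commutation relation and the inductive hypothesis give
`h (x * a * y) = h (x * y * a)`, which makes `g x = h (x * a) - h x` harmonic. A maximum principle
shows `g ≤ 0`: by non-degeneracy, near-maximal values of `g` at `x` force near-maximal values at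
`x * a ^ j` with a loss controlled uniformly in `x`, so if `M = sup g > 0` some telescoping sum
`h (x * a ^ N) - h x = ∑ j < N, g (x * a ^ j) ≥ N * M / 2` contradicts boundedness of `h`.
The same argument for `-h` gives `h (x * a) = h x`, and then
`h (x * a * w) = h (x * w * a) = h (x * w)`.
-/

open Filter Topology

/-- A central series for a semigroup `S` with identity: a finite chain
`{e} = T 0 ⊊ T 1 ⊊ ⋯ ⊊ T n = S` of subsemigroups such that each `T m` is right
reversible, and for every `1 ≤ m ≤ n`, `a ∈ T m` and `s ∈ S` there are
`x, y ∈ T (m-1)` with `x * a * s = y * s * a`. -/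
def IsCentralSeries {S : Type*} [Monoid S] (n : ℕ) (T : ℕ → Subsemigroup S) : Prop :=
  ((T 0 : Set S) = {1}) ∧ (T n = ⊤) ∧
  (∀ m, m < n → T m < T (m + 1)) ∧
  (∀ m, m ≤ n → ∀ x ∈ T m, ∀ y ∈ T m, ∃ a ∈ T m, ∃ b ∈ T m, a * x = b * y) ∧
  (∀ m, 1 ≤ m → m ≤ n → ∀ a ∈ T m, ∀ s : S,
    ∃ x ∈ T (m - 1), ∃ y ∈ T (m - 1), x * a * s = y * s * a)

section

variable {S : Type*} [Monoid S]

def IsHarmonic {E : Type*} [AddCommMonoid E] [TopologicalSpace E] [Module ℝ E]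
    (π : S → ℝ) (f : S → E) : Prop :=
  ∀ x, HasSum (fun y => π y • f (x * y)) (f x)

namespace IsHarmonic

variable {π : S → ℝ}

theorem of_tsum_eq {E : Type*} [NormedAddCommGroup E] [NormedSpace ℝ E] [CompleteSpace E]
    {f : S → E} (hpos : ∀ s, 0 ≤ π s) (hπ : Summable π) {C : ℝ} (hC : ∀ x, ‖f x‖ ≤ C)
    (hf : ∀ x, f x = ∑' y, π y • f (x * y)) : IsHarmonic π f := by
  intro x
  have hsumm : Summable fun y => π y • f (x * y) := by
    refine (hπ.mul_left C).of_norm_bounded fun y => ?_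
    rw [norm_smul, Real.norm_of_nonneg (hpos y), mul_comm]
    exact mul_le_mul_of_nonneg_right (hC _) (hpos y)
  exact hf x ▸ hsumm.hasSum

theorem map {E F : Type*} [AddCommMonoid E] [TopologicalSpace E] [Module ℝ E]
    [AddCommMonoid F] [TopologicalSpace F] [Module ℝ F] {f : S → E}
    (hf : IsHarmonic π f) (L : E →L[ℝ] F) : IsHarmonic π (L ∘ f) := fun x => by
  simpa only [Function.comp_apply, map_smul] using L.hasSum (hf x)

variable {h g : S → ℝ}

theorem neg (hh : IsHarmonic π h) : IsHarmonic π (-h) :=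
  hh.map (-ContinuousLinearMap.id ℝ ℝ)

theorem sub_mul_right (hh : IsHarmonic π h) {a : S}
    (hswap : ∀ x y, h (x * a * y) = h (x * y * a)) :
    IsHarmonic π fun x => h (x * a) - h x := fun x => by
  simpa only [hswap, smul_sub] using (hh (x * a)).sub (hh x)

section MaximumPrinciple

variable (hpos : ∀ s, 0 ≤ π s) (hsum : HasSum π 1) (hg : IsHarmonic π g)
  {M : ℝ} (hM : ∀ x, g x ≤ M)
include hpos hsum hg hM

theorem mul_sub_le_sub (x z : S) : π z * (M - g (x * z)) ≤ M - g x := by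
  have hdefect : HasSum (fun y => π y * (M - g (x * y))) (M - g x) := by
    simpa only [one_mul, smul_eq_mul, mul_sub, mul_comm M] using (hsum.mul_right M).sub (hg x)
  exact le_hasSum hdefect z fun y _ => mul_nonneg (hpos y) (sub_nonneg.2 (hM _))

theorem exists_pos_mul_sub_le {z : S} (hz : z ∈ Subsemigroup.closure {s | 0 < π s}) :
    ∃ w > 0, ∀ x, w * (M - g (x * z)) ≤ M - g x := by
  induction hz using Subsemigroup.closure_induction with
  | mem z hz => exact ⟨π z, hz, fun x => hg.mul_sub_le_sub hpos hsum hM x z⟩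
  | mul z₁ z₂ _ _ ih₁ ih₂ =>
    obtain ⟨w₁, hw₁, h₁⟩ := ih₁
    obtain ⟨w₂, hw₂, h₂⟩ := ih₂
    refine ⟨w₁ * w₂, mul_pos hw₁ hw₂, fun x => ?_⟩
    calc w₁ * w₂ * (M - g (x * (z₁ * z₂))) = w₁ * (w₂ * (M - g (x * z₁ * z₂))) := by
          rw [mul_assoc, mul_assoc x]
      _ ≤ w₁ * (M - g (x * z₁)) := mul_le_mul_of_nonneg_left (h₂ _) hw₁.le
      _ ≤ M - g x := h₁ x

theorem exists_pos_pow_mul_sub_le {a : S} (ha : a ∈ Subsemigroup.closure {s | 0 < π s}) :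
    ∃ c > 0, c ≤ 1 ∧ ∀ j x, c ^ j * (M - g (x * a ^ j)) ≤ M - g x := by
  obtain ⟨w, hw, hwa⟩ := hg.exists_pos_mul_sub_le hpos hsum hM ha
  refine ⟨min w 1, lt_min hw one_pos, min_le_right _ _, fun j => ?_⟩
  induction j with
  | zero => simp
  | succ j ih =>
    intro x
    calc min w 1 ^ (j + 1) * (M - g (x * a ^ (j + 1)))
        = min w 1 ^ j * (min w 1 * (M - g (x * a ^ j * a))) := by
          rw [pow_succ, pow_succ, mul_assoc, mul_assoc x]
      _ ≤ min w 1 ^ j * (w * (M - g (x * a ^ j * a))) := by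
          gcongr
          · exact sub_nonneg.2 (hM _)
          · exact min_le_left _ _
      _ ≤ min w 1 ^ j * (M - g (x * a ^ j)) := by gcongr; exact hwa _
      _ ≤ M - g x := ih x

end MaximumPrinciple

theorem apply_mul_le_of_sub_mul_right (hpos : ∀ s, 0 ≤ π s) (hsum : HasSum π 1)
    {a : S} (ha : a ∈ Subsemigroup.closure {s | 0 < π s}) {C : ℝ} (hC : ∀ x, |h x| ≤ C)
    (hg : IsHarmonic π fun x => h (x * a) - h x) (x : S) : h (x * a) ≤ h x := by
  set g := fun x => h (x * a) - h x
  have hgC : ∀ x, g x ≤ 2 * C := fun x => by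
    linarith [(abs_le.1 (hC (x * a))).2, (abs_le.1 (hC x)).1]
  set M := ⨆ x, g x
  have hgM : ∀ x, g x ≤ M := le_ciSup ⟨2 * C, Set.forall_mem_range.2 hgC⟩
  suffices M ≤ 0 from sub_nonpos.1 ((hgM x).trans this)
  by_contra! hM
  obtain ⟨c, hc, hc1, hcpow⟩ :=
    hg.exists_pos_pow_mul_sub_le hpos hsum hgM ha
  obtain ⟨N, hN⟩ := exists_nat_gt (4 * C / M)
  have hcN := pow_pos hc N
  obtain ⟨x, hx⟩ := exists_lt_of_lt_ciSup (show M - c ^ N * (M / 2) < M by nlinarith)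
  have hnear : ∀ j ∈ Finset.range N, M / 2 ≤ g (x * a ^ j) := fun j hj => by
    have hcj : c ^ N * (M - g (x * a ^ j)) ≤ c ^ j * (M - g (x * a ^ j)) :=
      mul_le_mul_of_nonneg_right (pow_le_pow_of_le_one hc.le hc1 (Finset.mem_range.1 hj).le)
        (sub_nonneg.2 (hgM _))
    have := (hcj.trans (hcpow j x)).trans_lt (by linarith : M - g x < c ^ N * (M / 2))
    linarith [lt_of_mul_lt_mul_left this hcN.le]
  have htelescope : ∑ j ∈ Finset.range N, g (x * a ^ j) = h (x * a ^ N) - h x := by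
    simpa only [g, pow_succ, pow_zero, mul_one, mul_assoc] using
      Finset.sum_range_sub (fun j => h (x * a ^ j)) N
  have hsum_le : N * (M / 2) ≤ 2 * C := by
    have := Finset.card_nsmul_le_sum _ _ _ hnear
    rw [Finset.card_range, nsmul_eq_mul, htelescope] at this
    linarith [(abs_le.1 (hC (x * a ^ N))).2, (abs_le.1 (hC x)).1]
  rw [div_lt_iff₀ hM] at hN
  linarith

theorem apply_mul_eq_of_swap (hpos : ∀ s, 0 ≤ π s) (hsum : HasSum π 1)
    (hh : IsHarmonic π h) {C : ℝ} (hC : ∀ x, |h x| ≤ C) {a : S}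
    (ha : a ∈ Subsemigroup.closure {s | 0 < π s}) (hswap : ∀ x y, h (x * a * y) = h (x * y * a)) (x : S) :
    h (x * a) = h x := by
  have hle := (hh.sub_mul_right hswap).apply_mul_le_of_sub_mul_right hpos hsum ha hC x
  have hge := (hh.neg.sub_mul_right (a := a) fun x y => by simp only [Pi.neg_apply, hswap]
    ).apply_mul_le_of_sub_mul_right hpos hsum ha (C := C) (fun x => by simpa using hC x) x
  exact le_antisymm hle (neg_le_neg_iff.1 hge)

end IsHarmonic

namespace IsCentralSeries

variable {n : ℕ} {T : ℕ → Subsemigroup S} {α : Type*} {f : S → α}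

theorem apply_mul_mul_eq (hT : IsCentralSeries n T)
    (hf : ∀ a, (∀ x y, f (x * a * y) = f (x * y * a)) → ∀ x, f (x * a) = f x) :
    ∀ m ≤ n, ∀ u ∈ T m, ∀ x w, f (x * u * w) = f (x * w) := by
  intro m
  induction m with
  | zero =>
    intro _ u hu x w
    rw [show u = 1 from (Set.ext_iff.1 hT.1 u).1 hu, mul_one]
  | succ m ih =>
    intro hm u hu
    have hinsert := ih (by omega)
    have hswap : ∀ x y, f (x * u * y) = f (x * y * u) := fun x y => by
      obtain ⟨u', hu', v', hv', hcomm⟩ := hT.2.2.2.2 (m + 1) (by omega) hm u hu y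
      calc f (x * u * y) = f (x * u' * (u * y)) := by rw [hinsert u' hu', mul_assoc]
        _ = f (x * v' * (y * u)) := by simp only [mul_assoc] at hcomm ⊢; rw [hcomm]
        _ = f (x * y * u) := by rw [hinsert v' hv', mul_assoc]
    intro x w
    rw [hswap, hf u hswap]

theorem apply_eq_apply_one (hT : IsCentralSeries n T)
    (hf : ∀ a, (∀ x y, f (x * a * y) = f (x * y * a)) → ∀ x, f (x * a) = f x) (x : S) :
    f x = f 1 := by
  simpa using hT.apply_mul_mul_eq hf n le_rfl x (hT.2.1 ▸ Subsemigroup.mem_top x) 1 1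

end IsCentralSeries

end

/-- **Semigroups with a central series have the Liouville property.**
If `S` is a semigroup with identity admitting a central series, then for every
non-degenerate probability measure `π` on `S`, every bounded `π`-harmonic function
`f : S → ℂ` is constant. -/
theorem central_series_implies_liouville
    {S : Type*} [Monoid S]
    (n : ℕ) (T : ℕ → Subsemigroup S) (hT : IsCentralSeries n T)
    (π : S → ℝ) (hpos : ∀ s, 0 ≤ π s) (hsum : HasSum π 1)
    (hnd : Subsemigroup.closure {s : S | 0 < π s} = ⊤)
    (f : S → ℂ) (hb : ∃ C : ℝ, ∀ x, ‖f x‖ ≤ C)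
    (hharm : ∀ x : S, f x = ∑' y : S, f (x * y) * (π y : ℂ)) :
    ∃ c : ℂ, ∀ x : S, f x = c := by
  obtain ⟨C, hC⟩ := hb
  have hf : IsHarmonic π f := .of_tsum_eq hpos hsum.summable hC fun x => by
    simpa only [Complex.real_smul, mul_comm] using hharm x
  refine ⟨f 1, hT.apply_eq_apply_one fun a hswap x => ?_⟩
  have ha : a ∈ Subsemigroup.closure {s | 0 < π s} := hnd ▸ Subsemigroup.mem_top a
  apply Complex.ext
  · exact (hf.map Complex.reCLM).apply_mul_eq_of_swap hpos hsum
      (fun x => (Complex.abs_re_le_norm _).trans (hC x)) ha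
      (fun x y => congrArg Complex.re (hswap x y)) x
  · exact (hf.map Complex.imCLM).apply_mul_eq_of_swap hpos hsum
      (fun x => (Complex.abs_im_le_norm _).trans (hC x)) ha
      (fun x y => congrArg Complex.im (hswap x y)) x
end

section
/- Let S be a cancellative semigroup with identity. Then S admits a central series if and only if there exist a nilpotent group G with identity e, a natural number n, a finite chain {e} = G_0 ⊊ G_1 ⊊ ⋯ ⊊ G_n = G of normal subgroups of G such that for every 1 ≤ m ≤ n, every g ∈ G and every g_m ∈ G_m there exists g_{m-1} ∈ G_{m-1} with g g_m = g_{m-1} g_m g, and an injective semigroup homomorphism ι : S → G such that, identifying S with ι(S), for every 0 ≤ m ≤ n the set S_m := S ∩ G_m satisfies G_m = S_m^{-1} S_m := {a^{-1} b : a, b ∈ S_m}. -/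
universe u

/-- The data of a nilpotent enveloping group for a cancellative semigroup `S` with
identity: a nilpotent group `G` with a finite chain `{e} = G 0 ⊊ G 1 ⊊ ⋯ ⊊ G n = G` of
normal subgroups such that for every `1 ≤ m ≤ n`, `g ∈ G` and `g_m ∈ G_m` there is
`g_{m-1} ∈ G_{m-1}` with `g * g_m = g_{m-1} * g_m * g`, together with an embedding
`ι : S → G` such that, identifying `S` with `ι S`, each `S_m := S ∩ G_m` satisfies
`G_m = S_m⁻¹ * S_m`. -/
structure NilpotentEnvelope (S : Type u) [Monoid S] : Type (u + 1) where
  G : Type u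
  [grp : Group G]
  nilpotent : Group.IsNilpotent G
  n : ℕ
  H : ℕ → Subgroup G
  bot : H 0 = ⊥
  top : H n = ⊤
  strict : ∀ m, m < n → H m < H (m + 1)
  normal : ∀ m, m ≤ n → (H m).Normal
  central : ∀ m, 1 ≤ m → m ≤ n → ∀ g : G, ∀ gm ∈ H m,
    ∃ h ∈ H (m - 1), g * gm = h * gm * g
  ι : S →ₙ* G
  inj : Function.Injective ι
  quot : ∀ m, m ≤ n →
    (H m : Set G) = {g : G | ∃ a b : S, ι a ∈ H m ∧ ι b ∈ H m ∧ g = (ι a)⁻¹ * ι b}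

/-!
The top term `S = S_n` of a central series is right reversible, so the cancellative monoid `S`
is a left Ore monoid and embeds into its group of left fractions `G`, every element of which is
of the form `a⁻¹ * b`. Right reversibility of `S_m` makes `G_m := S_m⁻¹ S_m` the subgroup
generated by `S_m`, and the identity `x * a * s = y * s * a` with `x, y ∈ S_{m-1}` says exactly
that the commutator of `a ∈ S_m` and `s ∈ S` is `x⁻¹ * y ∈ G_{m-1}`. As `S` generates `G`, by
induction each `G_{m-1}` is normal and `G_m / G_{m-1}` is central, so `G` is nilpotent; deleting
repetitions makes the chain `(G_m)` strict. Conversely, in a nilpotent envelope the sets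
`S_m := S ∩ G_m` form a central series: both defining conditions are read off from the
description `G_m = S_m⁻¹ S_m` through the injectivity of `S → G`.
-/

open Subgroup
open scoped commutatorElement

namespace Subsemigroup

variable {S : Type*} [Mul S]

def IsRightReversible (T : Subsemigroup S) : Prop :=
  ∀ x ∈ T, ∀ y ∈ T, ∃ a ∈ T, ∃ b ∈ T, a * x = b * y

variable {G : Type*} [Group G] (ι : S →ₙ* G) {T : Subsemigroup S}

theorem IsRightReversible.mem_closure_image_iff (hT : T.IsRightReversible)
    (hne : (T : Set S).Nonempty) {g : G} :
    g ∈ Subgroup.closure (ι '' T) ↔ ∃ a ∈ T, ∃ b ∈ T, g = (ι a)⁻¹ * ι b := by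
  refine ⟨fun hg => ?_, ?_⟩
  · obtain ⟨t, ht⟩ := hne
    induction hg using Subgroup.closure_induction with
    | mem _ h =>
      obtain ⟨a, ha, rfl⟩ := h
      exact ⟨t, ht, t * a, T.mul_mem ht ha, by rw [map_mul]; group⟩
    | one => exact ⟨t, ht, t, ht, by group⟩
    | mul _ _ _ _ hg hg' =>
      obtain ⟨a, ha, b, hb, rfl⟩ := hg
      obtain ⟨c, hc, d, hd, rfl⟩ := hg'
      obtain ⟨u, hu, v, hv, huv⟩ := hT b hb c hc
      have hbc : ι b * (ι c)⁻¹ = (ι u)⁻¹ * ι v := by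
        rw [mul_inv_eq_iff_eq_mul, mul_assoc, eq_inv_mul_iff_mul_eq, ← map_mul, ← map_mul, huv]
      refine ⟨u * a, T.mul_mem hu ha, v * d, T.mul_mem hv hd, ?_⟩
      calc (ι a)⁻¹ * ι b * ((ι c)⁻¹ * ι d) = (ι a)⁻¹ * (ι b * (ι c)⁻¹) * ι d := by group
        _ = (ι (u * a))⁻¹ * ι (v * d) := by rw [hbc, map_mul, map_mul]; group
    | inv _ _ hg =>
      obtain ⟨a, ha, b, hb, rfl⟩ := hg
      exact ⟨b, hb, a, ha, by group⟩
  · rintro ⟨a, ha, b, hb, rfl⟩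
    exact mul_mem (inv_mem (Subgroup.subset_closure ⟨a, ha, rfl⟩))
      (Subgroup.subset_closure ⟨b, hb, rfl⟩)

theorem IsRightReversible.coe_closure_image (hT : T.IsRightReversible)
    (hne : (T : Set S).Nonempty) :
    (Subgroup.closure (ι '' T) : Set G) = {g | ∃ a b : S, ι a ∈ Subgroup.closure (ι '' T) ∧
      ι b ∈ Subgroup.closure (ι '' T) ∧ g = (ι a)⁻¹ * ι b} := by
  ext g
  rw [SetLike.mem_coe, hT.mem_closure_image_iff ι hne]
  constructor
  · rintro ⟨a, ha, b, hb, rfl⟩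
    exact ⟨a, b, Subgroup.subset_closure ⟨a, ha, rfl⟩, Subgroup.subset_closure ⟨b, hb, rfl⟩, rfl⟩
  · rintro ⟨a, b, ha, hb, rfl⟩
    exact (hT.mem_closure_image_iff ι hne).1 (mul_mem (inv_mem ha) hb)

end Subsemigroup

namespace Subgroup

variable {G : Type*} [Group G]

theorem commutator_closure_le {A B : Set G} {N : Subgroup G} [N.Normal]
    (h : ∀ a ∈ A, ∀ b ∈ B, ⁅a, b⁆ ∈ N) : ⁅closure A, closure B⁆ ≤ N := by
  rw [← QuotientGroup.ker_mk' N, ← map_eq_bot_iff, map_commutator, MonoidHom.map_closure,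
    MonoidHom.map_closure, commutator_eq_bot_iff_le_centralizer, closure_le, centralizer_closure]
  rintro _ ⟨a, ha, rfl⟩ _ ⟨b, hb, rfl⟩
  rw [eq_comm, ← commutatorElement_eq_one_iff_mul_comm, ← map_commutatorElement,
    QuotientGroup.mk'_apply, QuotientGroup.eq_one_iff]
  exact h a ha b hb

theorem commutatorElement_mem_iff_exists {K : Subgroup G} {g x : G} :
    ⁅g, x⁆ ∈ K ↔ ∃ h ∈ K, g * x = h * x * g := by
  refine ⟨fun hK => ⟨_, hK, by group⟩, ?_⟩
  rintro ⟨h, hK, hgx⟩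
  convert hK
  rw [commutatorElement_def, hgx]
  group

theorem commutatorElement_mem_of_commutator_le {K N : Subgroup G} (h : ⁅K, ⊤⁆ ≤ N) {x : G}
    (hx : x ∈ K) (g : G) : ⁅g, x⁆ ∈ N :=
  h (commutator_comm K ⊤ ▸ commutator_mem_commutator (mem_top g) hx)

theorem normal_of_commutator_le {K N : Subgroup G} (h : ⁅K, ⊤⁆ ≤ N) (hNK : N ≤ K) : K.Normal where
  conj_mem x hx g := by
    rw [show g * x * g⁻¹ = ⁅g, x⁆ * x by group]
    exact mul_mem (hNK (commutatorElement_mem_of_commutator_le h hx g)) hx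

end Subgroup

theorem Group.isNilpotent_of_commutator_le {G : Type*} [Group G] {H : ℕ → Subgroup G} {n : ℕ}
    (h0 : H 0 = ⊥) (hn : H n = ⊤) (hH : ∀ m < n, ⁅H (m + 1), ⊤⁆ ≤ H m) : Group.IsNilpotent G := by
  refine (Subgroup.nilpotent_iff_finite_ascending_central_series G).2
    ⟨n, fun m => H (min m n), ⟨by simpa using h0, fun x m hx g => ?_⟩, by simpa using hn⟩
  rcases lt_or_ge m n with hm | hm
  · simp only [min_eq_left (Nat.succ_le_of_lt hm), min_eq_left hm.le] at hx ⊢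
    exact Subgroup.commutator_le.1 (hH m hm) x hx g (mem_top g)
  · simp [min_eq_right hm, hn]

theorem exists_strict_subchain {α : Type*} [PartialOrder α] (f : ℕ → α) (n : ℕ)
    (hf : ∀ m < n, f m ≤ f (m + 1)) :
    ∃ (k : ℕ) (g : ℕ → α), g 0 = f 0 ∧ g k = f n ∧
      ∀ m < k, ∃ j < n, f j < f (j + 1) ∧ g m = f j ∧ g (m + 1) = f (j + 1) := by
  induction n with
  | zero => exact ⟨0, fun _ => f 0, rfl, rfl, fun m hm => absurd hm (Nat.not_lt_zero m)⟩
  | succ n ih =>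
    obtain ⟨k, g, h0, hk, hg⟩ := ih fun m hm => hf m (by omega)
    rcases (hf n n.lt_succ_self).eq_or_lt with heq | hlt
    · exact ⟨k, g, h0, hk.trans heq, fun m hm => (hg m hm).imp fun j ⟨hj, h⟩ => ⟨by omega, h⟩⟩
    · refine ⟨k + 1, fun m => if m ≤ k then g m else f (n + 1), by simp [h0], by simp, ?_⟩
      intro m hm
      rcases (Nat.lt_succ_iff.1 hm).lt_or_eq with hm | rfl
      · obtain ⟨j, hj, h⟩ := hg m hm
        exact ⟨j, by omega, by simpa [hm.le, Nat.succ_le_of_lt hm] using h⟩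
      · exact ⟨n, by omega, hlt, by simp [hk], by simp⟩

open OreLocalization in
theorem exists_group_of_fractions {S : Type u} [CancelMonoid S]
    (hS : ∀ x y : S, ∃ a b : S, a * x = b * y) :
    ∃ (G : Type u) (_ : Group G) (ι : S →* G), Function.Injective ι ∧
      closure (Set.range ι) = ⊤ := by
  choose a b hab using hS
  let _ : OreSet (⊤ : Submonoid S) :=
    { ore_right_cancel := fun _ _ _ h => ⟨1, by rw [mul_right_cancel h]⟩
      oreNum := fun r s => b r s
      oreDenom := fun r s => ⟨a r s, trivial⟩
      ore_eq := fun r s => hab r s }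
  -- `Mˣ` is the group of left fractions: `r /ₒ s = (s /ₒ 1)⁻¹ * (r /ₒ 1)`
  let M := OreLocalization (⊤ : Submonoid S) S
  let ι : S →* Mˣ :=
    Units.liftRight numeratorHom (fun r => numeratorUnit ⟨r, trivial⟩) fun _ => rfl
  have hι : ∀ r, (ι r : M) = r /ₒ 1 := fun _ => rfl
  refine ⟨_, inferInstance, ι, fun r r' h => ?_, eq_top_iff.2 fun u _ => ?_⟩
  · obtain ⟨u, v, huv, hu⟩ := oreDiv_eq_iff.1 (by simpa only [hι] using congrArg Units.val h)
    rw [OneMemClass.coe_one, mul_one, mul_one] at hu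
    rw [Submonoid.smul_def, smul_eq_mul, hu, smul_eq_mul] at huv
    exact (mul_left_cancel huv).symm
  · obtain ⟨r, s, hrs⟩ : ∃ (r : S) (s : (⊤ : Submonoid S)), (u : M) = r /ₒ s := by
      induction (u : M) using OreLocalization.ind with
      | c r s => exact ⟨r, s, rfl⟩
    have hu : u = (ι s)⁻¹ * ι r := by
      rw [eq_inv_mul_iff_mul_eq, Units.ext_iff, Units.val_mul, hι, hι, hrs,
        OreLocalization.mul_cancel]
    rw [hu]
    exact mul_mem (inv_mem (subset_closure ⟨s, rfl⟩)) (subset_closure ⟨r, rfl⟩)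

theorem nonempty_nilpotentEnvelope_of_chain {S : Type u} [Monoid S] {G : Type u} [Group G]
    (ι : S →ₙ* G) (hι : Function.Injective ι) {n : ℕ} {H : ℕ → Subgroup G} (h0 : H 0 = ⊥)
    (hn : H n = ⊤) (hmono : ∀ m < n, H m ≤ H (m + 1)) (hcomm : ∀ m < n, ⁅H (m + 1), ⊤⁆ ≤ H m)
    (hfrac : ∀ m ≤ n, (H m : Set G) =
      {g | ∃ a b : S, ι a ∈ H m ∧ ι b ∈ H m ∧ g = (ι a)⁻¹ * ι b}) :
    Nonempty (NilpotentEnvelope S) := by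
  obtain ⟨k, H', h0', hk', hH'⟩ := exists_strict_subchain H n hmono
  have hcomm' : ∀ m < k, ⁅H' (m + 1), ⊤⁆ ≤ H' m := fun m hm => by
    obtain ⟨j, hj, -, hm, hm'⟩ := hH' m hm
    simpa only [hm, hm'] using hcomm j hj
  have hterm : ∀ m ≤ k, ∃ j ≤ n, H' m = H j := by
    rintro (_ | m) hm
    · exact ⟨0, n.zero_le, h0'⟩
    · obtain ⟨j, hj, -, -, hm'⟩ := hH' m hm
      exact ⟨j + 1, hj, hm'⟩
  exact ⟨{
    G := G
    nilpotent := Group.isNilpotent_of_commutator_le (h0'.trans h0) (hk'.trans hn) hcomm'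
    n := k
    H := H'
    bot := h0'.trans h0
    top := hk'.trans hn
    strict := fun m hm => by
      obtain ⟨j, -, hlt, hm, hm'⟩ := hH' m hm
      rwa [hm, hm']
    normal := by
      rintro (_ | m) hm
      · rw [h0', h0]
        infer_instance
      · obtain ⟨j, -, hlt, hj, hj'⟩ := hH' m hm
        exact normal_of_commutator_le (hcomm' m hm) (hj ▸ hj' ▸ hlt.le)
    central := by
      rintro (_ | m) h1 hm g x hx
      · omega
      · exact commutatorElement_mem_iff_exists.1
          (commutatorElement_mem_of_commutator_le (hcomm' m hm) hx g)
    ι := ι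
    inj := hι
    quot := fun m hm => by
      obtain ⟨j, hj, hm⟩ := hterm m hm
      rw [hm]
      exact hfrac j hj }⟩

namespace IsCentralSeries

section

variable {S : Type*} [Monoid S] {n : ℕ} {T : ℕ → Subsemigroup S} (hT : IsCentralSeries n T)
include hT

theorem le_succ {m : ℕ} (hm : m < n) : T m ≤ T (m + 1) :=
  (hT.2.2.1 m hm).le

theorem one_mem {m : ℕ} (hm : m ≤ n) : (1 : S) ∈ T m := by
  induction m with
  | zero => rw [← SetLike.mem_coe, hT.1]; rfl
  | succ m ih => exact hT.le_succ hm (ih (by omega))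

theorem isRightReversible {m : ℕ} (hm : m ≤ n) : (T m).IsRightReversible :=
  hT.2.2.2.1 m hm

variable {G : Type*} [Group G] (ι : S →* G)

theorem closure_image_zero : closure (ι '' T 0) = ⊥ := by
  rw [hT.1, Set.image_singleton, map_one, closure_singleton_one]

theorem closure_image_top (hι : closure (Set.range ι) = ⊤) : closure (ι '' T n) = ⊤ := by
  rw [hT.2.1, Subsemigroup.coe_top, Set.image_univ, hι]

theorem closure_image_le_succ {m : ℕ} (hm : m < n) :
    closure (ι '' T m) ≤ closure (ι '' T (m + 1)) :=
  closure_mono (Set.image_mono (hT.le_succ hm))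

theorem commutator_le_of_normal (hι : closure (Set.range ι) = ⊤) {m : ℕ} (hm : m < n)
    [(closure (ι '' T m)).Normal] : ⁅closure (ι '' T (m + 1)), ⊤⁆ ≤ closure (ι '' T m) := by
  rw [← hι]
  refine commutator_closure_le ?_
  rintro _ ⟨a, ha, rfl⟩ _ ⟨s, rfl⟩
  obtain ⟨x, hx, y, hy, hxy⟩ := hT.2.2.2.2 (m + 1) (by omega) hm a ha s
  have hcomm : ⁅ι a, ι s⁆ = (ι x)⁻¹ * ι y := by
    calc ⁅ι a, ι s⁆ = (ι x)⁻¹ * ι (x * a * s) * (ι a)⁻¹ * (ι s)⁻¹ := by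
          rw [map_mul, map_mul]; group
      _ = (ι x)⁻¹ * ι y := by rw [hxy, map_mul, map_mul]; group
  rw [hcomm]
  exact mul_mem (inv_mem (subset_closure ⟨x, hx, rfl⟩)) (subset_closure ⟨y, hy, rfl⟩)

theorem normal_closure_image (hι : closure (Set.range ι) = ⊤) {m : ℕ} (hm : m ≤ n) :
    (closure (ι '' T m)).Normal := by
  induction m with
  | zero => rw [hT.closure_image_zero]; infer_instance
  | succ m ih =>
    have := ih (by omega)
    exact normal_of_commutator_le (hT.commutator_le_of_normal ι hι hm)
      (hT.closure_image_le_succ ι hm)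

end

theorem nonempty_nilpotentEnvelope {S : Type u} [CancelMonoid S] {n : ℕ} {T : ℕ → Subsemigroup S}
    (hT : IsCentralSeries n T) : Nonempty (NilpotentEnvelope S) := by
  have hS : ∀ x y : S, ∃ a b : S, a * x = b * y := fun x y => by
    obtain ⟨a, -, b, -, hab⟩ := (hT.2.1 ▸ hT.isRightReversible le_rfl) x trivial y trivial
    exact ⟨a, b, hab⟩
  obtain ⟨G, _, ι, hinj, hι⟩ := exists_group_of_fractions hS
  refine nonempty_nilpotentEnvelope_of_chain ι.toMulHom hinj (H := fun m => closure (ι '' T m))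
    (hT.closure_image_zero ι) (hT.closure_image_top ι hι)
    (fun m hm => hT.closure_image_le_succ ι hm)
    (fun m hm => have := hT.normal_closure_image ι hι hm.le; hT.commutator_le_of_normal ι hι hm)
    (fun m hm => (hT.isRightReversible hm).coe_closure_image ι.toMulHom ⟨1, hT.one_mem hm⟩)

end IsCentralSeries

namespace NilpotentEnvelope

variable {S : Type u} [Monoid S] (E : NilpotentEnvelope S)

attribute [local instance] NilpotentEnvelope.grp

def series (m : ℕ) : Subsemigroup S :=
  (E.H m).toSubmonoid.toSubsemigroup.comap E.ι

theorem mem_series {m : ℕ} {s : S} : s ∈ E.series m ↔ E.ι s ∈ E.H m := Iff.rfl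

theorem mem_H_iff {m : ℕ} (hm : m ≤ E.n) {g : E.G} :
    g ∈ E.H m ↔ ∃ a ∈ E.series m, ∃ b ∈ E.series m, g = (E.ι a)⁻¹ * E.ι b := by
  rw [← SetLike.mem_coe, E.quot m hm]
  simp only [Set.mem_ofPred_eq, mem_series, exists_and_left]

theorem ι_one : E.ι 1 = 1 :=
  mul_eq_left.1 (by rw [← map_mul, one_mul])

theorem H_eq_of_series_eq {m m' : ℕ} (hm : m ≤ E.n) (hm' : m' ≤ E.n)
    (h : E.series m = E.series m') : E.H m = E.H m' := by
  ext g
  rw [E.mem_H_iff hm, E.mem_H_iff hm', h]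

theorem isRightReversible_series {m : ℕ} (hm : m ≤ E.n) : (E.series m).IsRightReversible := by
  intro x hx y hy
  obtain ⟨a, ha, b, hb, hab⟩ :=
    (E.mem_H_iff hm).1 (mul_mem ((E.mem_series).1 hx) (inv_mem ((E.mem_series).1 hy)))
  refine ⟨a, ha, b, hb, E.inj ?_⟩
  rw [map_mul, map_mul, ← mul_inv_eq_iff_eq_mul, mul_assoc, ← eq_inv_mul_iff_mul_eq, ← hab]

theorem exists_mul_mul_eq_mul_mul {m : ℕ} (h1 : 1 ≤ m) (hm : m ≤ E.n) {a : S}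
    (ha : a ∈ E.series m) (s : S) :
    ∃ x ∈ E.series (m - 1), ∃ y ∈ E.series (m - 1), x * a * s = y * s * a := by
  obtain ⟨h, hh, hsa⟩ := E.central m h1 hm (E.ι s) (E.ι a) ha
  obtain ⟨x, hx, y, hy, rfl⟩ := (E.mem_H_iff (by omega)).1 hh
  refine ⟨y, hy, x, hx, E.inj ?_⟩
  rw [map_mul, map_mul, map_mul, map_mul, mul_assoc (E.ι x), hsa]
  group

theorem isCentralSeries : IsCentralSeries E.n E.series := by
  refine ⟨?_, ?_, fun m hm => ?_, fun m hm => E.isRightReversible_series hm,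
    fun m h1 hm a ha s => E.exists_mul_mul_eq_mul_mul h1 hm ha s⟩
  · ext s
    rw [SetLike.mem_coe, mem_series, E.bot, mem_bot, ← E.ι_one, E.inj.eq_iff]
    rfl
  · ext s
    simp only [mem_series, E.top, mem_top, Subsemigroup.mem_top]
  · refine lt_of_le_of_ne (fun s hs => (E.strict m hm).le hs) fun h => ?_
    exact (E.strict m hm).ne (E.H_eq_of_series_eq hm.le hm h)

end NilpotentEnvelope

/-- **Characterisation of cancellative semigroups with identity admitting a central
series**: `S` admits a central series if and only if `S` embeds into a nilpotent group
`G` with a chain of normal subgroups as in `NilpotentEnvelope`. -/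
theorem central_series_iff_nilpotent_envelope
    {S : Type u} [CancelMonoid S] :
    (∃ (n : ℕ) (T : ℕ → Subsemigroup S), IsCentralSeries n T) ↔
      Nonempty (NilpotentEnvelope S) :=
  ⟨fun ⟨_, _, hT⟩ => hT.nonempty_nilpotentEnvelope, fun ⟨E⟩ => ⟨E.n, E.series, E.isCentralSeries⟩⟩
end

section
/- Let R be a subring of ℝ and let S be the set of upper unitriangular matrices [[1,x,z],[0,1,y],[0,0,1]] ∈ GL_3(ℝ) with x, y, z ∈ R ∩ [0,∞). Then S is a submonoid of GL_3(ℝ) and S admits a central series of length 2; explicitly, taking S_0 = {identity matrix}, S_1 = {[[1,0,z],[0,1,0],[0,0,1]] : z ∈ R ∩ [0,∞)} and S_2 = S gives a central series for S. -/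
/-- The upper unitriangular matrix `[[1,x,z],[0,1,y],[0,0,1]]`. -/
noncomputable def heis (x y z : ℝ) : Matrix (Fin 3) (Fin 3) ℝ :=
  !![1, x, z; 0, 1, y; 0, 0, 1]

/-- The Heisenberg semigroup over `R`: unitriangular matrices with entries in
`R ∩ [0, ∞)`. -/
def heisSet (R : Subring ℝ) : Set (Matrix (Fin 3) (Fin 3) ℝ) :=
  {A | ∃ x y z : ℝ, x ∈ R ∧ y ∈ R ∧ z ∈ R ∧ 0 ≤ x ∧ 0 ≤ y ∧ 0 ≤ z ∧ A = heis x y z}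

lemma heis_mul (x y z x' y' z' : ℝ) :
    heis x y z * heis x' y' z' = heis (x + x') (y + y') (z + z' + x * y') := by
  ext i j
  fin_cases i <;> fin_cases j <;>
    simp [heis, Matrix.mul_apply, Fin.sum_univ_three, Matrix.vecHead, Matrix.vecTail] <;> ring

lemma heis_one : heis 0 0 0 = 1 := by
  ext i j
  fin_cases i <;> fin_cases j <;> simp [heis, Matrix.one_apply, Matrix.vecHead, Matrix.vecTail]

lemma heis_inj {x y z x' y' z' : ℝ} (h : heis x y z = heis x' y' z') :
    x = x' ∧ y = y' ∧ z = z' := by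
  refine ⟨?_, ?_, ?_⟩
  · have := congrFun (congrFun h 0) 1; simpa [heis] using this
  · have := congrFun (congrFun h 1) 2; simpa [heis] using this
  · have := congrFun (congrFun h 0) 2; simpa [heis] using this

lemma heis_det (x y z : ℝ) : (heis x y z).det = 1 := by
  simp [heis, Matrix.det_fin_three, Matrix.vecHead, Matrix.vecTail]

/-- The Heisenberg set as a submonoid. -/
noncomputable def heisSubmonoid (R : Subring ℝ) : Submonoid (Matrix (Fin 3) (Fin 3) ℝ) where
  carrier := heisSet R
  one_mem' := ⟨0, 0, 0, R.zero_mem, R.zero_mem, R.zero_mem, le_refl 0, le_refl 0, le_refl 0,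
    heis_one.symm⟩
  mul_mem' := by
    rintro A B ⟨x, y, z, hx, hy, hz, hx0, hy0, hz0, rfl⟩
      ⟨x', y', z', hx', hy', hz', hx0', hy0', hz0', rfl⟩
    exact ⟨x + x', y + y', z + z' + x * y', R.add_mem hx hx', R.add_mem hy hy',
      R.add_mem (R.add_mem hz hz') (R.mul_mem hx hy'), by positivity, by positivity,
      by positivity, heis_mul ..⟩

/-- **The Heisenberg semigroup over a subring `R` of `ℝ` is a monoid of invertible
matrices admitting a central series of length 2**, with
`S_0 = {1}`, `S_1 = {[[1,0,z],[0,1,0],[0,0,1]] : z ∈ R ∩ [0,∞)}` and `S_2 = S`. -/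
theorem heisenberg_semigroup_central_series (R : Subring ℝ) :
    ∃ S' : Submonoid (Matrix (Fin 3) (Fin 3) ℝ),
      (S' : Set (Matrix (Fin 3) (Fin 3) ℝ)) = heisSet R ∧
      (∀ A ∈ S', IsUnit A) ∧
      ∃ T : ℕ → Subsemigroup S',
        IsCentralSeries 2 T ∧
        ((T 1 : Set S') =
          {A : S' | ∃ z : ℝ, z ∈ R ∧ 0 ≤ z ∧ (A : Matrix (Fin 3) (Fin 3) ℝ) = heis 0 0 z}) := by
  refine ⟨heisSubmonoid R, rfl, ?_, ?_⟩
  · rintro A ⟨x, y, z, hx, hy, hz, _, _, _, rfl⟩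
    rw [Matrix.isUnit_iff_isUnit_det, heis_det]
    exact isUnit_one
  · set S' := heisSubmonoid R with hS'
    let T0 : Subsemigroup S' :=
      { carrier := {1}
        mul_mem' := by rintro a b rfl rfl; simp }
    let T1 : Subsemigroup S' :=
      { carrier := {A : S' | ∃ z : ℝ, z ∈ R ∧ 0 ≤ z ∧ (A : Matrix (Fin 3) (Fin 3) ℝ) = heis 0 0 z}
        mul_mem' := by
          rintro a b ⟨z, hz, hz0, ha⟩ ⟨w, hw, hw0, hb⟩
          refine ⟨z + w, R.add_mem hz hw, by positivity, ?_⟩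
          push_cast
          rw [ha, hb, heis_mul]
          ring_nf }
    have hT01 : T0 < T1 := by
      rw [SetLike.lt_iff_le_and_exists]
      refine ⟨?_, ⟨⟨heis 0 0 1, 0, 0, 1, R.zero_mem, R.zero_mem, R.one_mem, le_refl 0,
          le_refl 0, zero_le_one, rfl⟩, ⟨1, R.one_mem, zero_le_one, rfl⟩, ?_⟩⟩
      · intro a ha
        have ha' : a = 1 := ha
        subst ha'
        refine ⟨0, R.zero_mem, le_refl 0, ?_⟩
        rw [OneMemClass.coe_one]
        exact heis_one.symm
      · intro h
        have h' : heis 0 0 1 = (1 : Matrix (Fin 3) (Fin 3) ℝ) := congrArg Subtype.val h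
        rw [← heis_one] at h'
        exact one_ne_zero (heis_inj h').2.2
    have hT12 : T1 < (⊤ : Subsemigroup S') := by
      rw [SetLike.lt_iff_le_and_exists]
      refine ⟨le_top, ⟨⟨heis 1 0 0, 1, 0, 0, R.one_mem, R.zero_mem, R.zero_mem, zero_le_one,
          le_refl 0, le_refl 0, rfl⟩, Subsemigroup.mem_top _, ?_⟩⟩
      rintro ⟨z, _, _, hz⟩
      exact one_ne_zero (heis_inj hz).1
    refine ⟨fun n => if n = 0 then T0 else if n = 1 then T1 else ⊤, ⟨rfl, rfl, ?_, ?_, ?_⟩, rfl⟩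
    · intro m hm
      interval_cases m
      · exact hT01
      · exact hT12
    · -- right reversibility
      intro m hm x hx y hy
      interval_cases m
      · refine ⟨x, hx, y, hy, ?_⟩
        have hx' : x = 1 := hx
        have hy' : y = 1 := hy
        rw [hx', hy']
      · -- T1 is commutative
        obtain ⟨z, hz, hz0, hxz⟩ := hx
        obtain ⟨w, hw, hw0, hyw⟩ := hy
        refine ⟨y, ⟨w, hw, hw0, hyw⟩, x, ⟨z, hz, hz0, hxz⟩, ?_⟩
        apply Subtype.ext
        push_cast
        rw [hxz, hyw, heis_mul, heis_mul]
        ring_nf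
      · -- ⊤
        obtain ⟨x1, x2, x3, hx1, hx2, hx3, hx10, hx20, hx30, hxe⟩ := x.2
        obtain ⟨y1, y2, y3, hy1, hy2, hy3, hy10, hy20, hy30, hye⟩ := y.2
        refine ⟨⟨heis y1 y2 (y3 + x1 * y2), y1, y2, y3 + x1 * y2, hy1, hy2,
            R.add_mem hy3 (R.mul_mem hx1 hy2), hy10, hy20, by positivity, rfl⟩,
          Subsemigroup.mem_top _,
          ⟨heis x1 x2 (x3 + y1 * x2), x1, x2, x3 + y1 * x2, hx1, hx2,
            R.add_mem hx3 (R.mul_mem hy1 hx2), hx10, hx20, by positivity, rfl⟩,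
          Subsemigroup.mem_top _, ?_⟩
        apply Subtype.ext
        push_cast
        rw [hxe, hye, heis_mul, heis_mul]
        ring_nf
    · -- central condition
      intro m hm1 hm2 a ha s
      interval_cases m
      · -- m = 1: a ∈ T1 is central
        obtain ⟨z, hz, hz0, haz⟩ := ha
        refine ⟨1, rfl, 1, rfl, ?_⟩
        apply Subtype.ext
        obtain ⟨s1, s2, s3, _, _, _, _, _, _, hse⟩ := s.2
        push_cast
        rw [haz, hse, one_mul, one_mul, heis_mul, heis_mul]
        ring_nf
      · -- m = 2
        obtain ⟨a1, a2, a3, ha1, ha2, ha3, ha10, ha20, ha30, hae⟩ := a.2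
        obtain ⟨s1, s2, s3, hs1, hs2, hs3, hs10, hs20, hs30, hse⟩ := s.2
        refine ⟨⟨heis 0 0 (s1 * a2), 0, 0, s1 * a2, R.zero_mem, R.zero_mem,
            R.mul_mem hs1 ha2, le_refl 0, le_refl 0, by positivity, rfl⟩,
          ⟨s1 * a2, R.mul_mem hs1 ha2, by positivity, rfl⟩,
          ⟨heis 0 0 (a1 * s2), 0, 0, a1 * s2, R.zero_mem, R.zero_mem,
            R.mul_mem ha1 hs2, le_refl 0, le_refl 0, by positivity, rfl⟩,
          ⟨a1 * s2, R.mul_mem ha1 hs2, by positivity, rfl⟩, ?_⟩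
        apply Subtype.ext
        push_cast
        rw [hae, hse, heis_mul, heis_mul, heis_mul, heis_mul]
        ring_nf
end

section
/- Let X be a locally compact, second countable Hausdorff space and S a countable discrete semigroup with identity acting on X from the right by continuous maps. Then the transformation semigroupoid X ⋊ S is uniform Reiter if and only if the following holds: for every ε > 0, every finite set F ⊆ S and every compact set C ⊆ X, there exists a continuous family θ = (θ^x)_{x∈X} of probability measures on S such that ‖θ^x − s θ^{x.s}‖_{ℓ¹} < ε for all s ∈ F and x ∈ C, and such that ⋃_{x∈X} supp(θ^x) is a finite subset of S. -/
open Filter Topology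

section TransformationSemigroupoid

variable {X : Type*} {S : Type*}

/-- `θ` is a probability measure on the discrete space `S`. -/
def IsProbFn [Monoid S] (θ : S → ℝ) : Prop := (∀ s, 0 ≤ θ s) ∧ HasSum θ 1

/-- The ℓ¹-distance between two summable functions on `S`. -/
noncomputable def dist1 [Monoid S] (θ₁ θ₂ : S → ℝ) : ℝ := ∑' u : S, |θ₁ u - θ₂ u|

/-- The pushforward `s • θ` of `θ` under left translation `t ↦ s * t`. -/
noncomputable def pushf [Monoid S] [DecidableEq S] (s : S) (θ : S → ℝ) : S → ℝ :=
  fun u => ∑' t : S, if s * t = u then θ t else 0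

/-- A family `(θ^x)_{x ∈ X}` is continuous if `x ↦ θ^x` is continuous into `ℓ¹(S)`. -/
def L1Cont [Monoid S] [TopologicalSpace X] (θ : X → S → ℝ) : Prop :=
  ∀ x₀ : X, Tendsto (fun x => ∑' s : S, |θ x s - θ x₀ s|) (𝓝 x₀) (𝓝 0)

/-- The transformation semigroupoid `X ⋊ S` of a right action `act` of `S` on `X`
(with the counting-measure quasi-Haar system) is **uniform Reiter** if there is a
sequence of continuous families of probability measures on `S` which is asymptotically
invariant, uniformly on compact subsets of `X` and finite subsets of `S`. -/
def UniformReiter [Monoid S] [DecidableEq S] [TopologicalSpace X]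
    (act : X → S → X) : Prop :=
  ∃ θ : ℕ → X → S → ℝ,
    (∀ n x, IsProbFn (θ n x)) ∧ (∀ n, L1Cont (θ n)) ∧
    ∀ C : Set X, IsCompact C → ∀ F : Finset S, ∀ ε : ℝ, 0 < ε →
      ∃ N : ℕ, ∀ n ≥ N, ∀ x ∈ C, ∀ s ∈ F,
        dist1 (θ n x) (pushf s (θ n (act x s))) < ε

end TransformationSemigroupoid


/-
A continuous family of probability measures on `S` is uniformly tight on compact subsets of `X`:
almost all of the mass of every `θ^x`, `x ∈ K`, lies in one finite set `E`. Truncating to `E` and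
moving the missing mass to the identity keeps the family continuous and changes each `θ^x` by at
most twice its tail in `ℓ¹`, while left translation does not increase `ℓ¹`-distances. Applied on the
compact set `C ∪ ⋃_{s ∈ F} C.s`, this turns a member of a Reiter sequence into a finitely supported
family. Conversely, the `ε`-condition along a compact exhaustion of `X`, an exhausting sequence of
finite subsets of `S` and `ε = 1/(n+1)` yields a Reiter sequence.
-/

lemma summable_abs_sub {ι : Type*} {f g : ι → ℝ} (hf : Summable f) (hg : Summable g) :
    Summable fun i => |f i - g i| :=
  (hf.sub hg).abs

lemma abs_tsum_sub_tsum_le {ι : Type*} {f g : ι → ℝ} (hf : Summable f) (hg : Summable g) :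
    |∑' i, f i - ∑' i, g i| ≤ ∑' i, |f i - g i| := by
  have h : Summable fun i => ‖f i - g i‖ := summable_abs_sub hf hg
  rw [← hf.tsum_sub hg]
  simpa only [Real.norm_eq_abs] using norm_tsum_le_tsum_norm h

lemma hasSum_indicator_finset {ι : Type*} (E : Finset ι) (f : ι → ℝ) :
    HasSum ((↑E : Set ι).indicator f) (∑ i ∈ E, f i) :=
  hasSum_subtype_iff_indicator.1 (E.hasSum f)

section Dist1

variable {S : Type*} [Monoid S]

lemma IsProbFn.summable {θ : S → ℝ} (h : IsProbFn θ) : Summable θ :=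
  h.2.summable

lemma IsProbFn.sum_le_one {θ : S → ℝ} (h : IsProbFn θ) (E : Finset S) : ∑ t ∈ E, θ t ≤ 1 :=
  sum_le_hasSum E (fun t _ => h.1 t) h.2

lemma dist1_nonneg (f g : S → ℝ) : 0 ≤ dist1 f g :=
  tsum_nonneg fun _ => abs_nonneg _

lemma dist1_comm (f g : S → ℝ) : dist1 f g = dist1 g f :=
  tsum_congr fun _ => abs_sub_comm _ _

lemma dist1_triangle {f g h : S → ℝ} (hf : Summable f) (hg : Summable g) (hh : Summable h) :
    dist1 f h ≤ dist1 f g + dist1 g h := by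
  rw [dist1, dist1, dist1, ← (summable_abs_sub hf hg).tsum_add (summable_abs_sub hg hh)]
  exact (summable_abs_sub hf hh).tsum_le_tsum (fun u => abs_sub_le _ _ _)
    ((summable_abs_sub hf hg).add (summable_abs_sub hg hh))

lemma abs_apply_sub_le_dist1 {f g : S → ℝ} (hf : Summable f) (hg : Summable g) (u : S) :
    |f u - g u| ≤ dist1 f g :=
  (summable_abs_sub hf hg).le_tsum u fun _ _ => abs_nonneg _

end Dist1

section Pushforward

variable {S : Type*} [Monoid S] [DecidableEq S]

lemma pushf_apply_eq_tsum_fiber (s : S) (θ : S → ℝ) (u : S) :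
    pushf s θ u = ∑' t : (s * ·) ⁻¹' {u}, θ t := by
  rw [tsum_subtype]
  exact tsum_congr fun t => by by_cases h : s * t = u <;> simp [h]

lemma HasSum.pushf {θ : S → ℝ} {a : ℝ} (h : HasSum θ a) (s : S) : HasSum (pushf s θ) a := by
  simpa only [← pushf_apply_eq_tsum_fiber] using h.tsum_fiberwise (s * ·)

lemma IsProbFn.pushf {θ : S → ℝ} (h : IsProbFn θ) (s : S) : IsProbFn (pushf s θ) :=
  ⟨fun _ => tsum_nonneg fun _ => by split_ifs <;> simp [h.1], h.2.pushf s⟩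

lemma dist1_pushf_le {θ₁ θ₂ : S → ℝ} (h₁ : Summable θ₁) (h₂ : Summable θ₂) (s : S) :
    dist1 (pushf s θ₁) (pushf s θ₂) ≤ dist1 θ₁ θ₂ := by
  have hD : HasSum (pushf s fun t => |θ₁ t - θ₂ t|) (dist1 θ₁ θ₂) :=
    (summable_abs_sub h₁ h₂).hasSum.pushf s
  have hpt : ∀ u, |pushf s θ₁ u - pushf s θ₂ u| ≤ pushf s (fun t => |θ₁ t - θ₂ t|) u := by
    intro u
    simp only [pushf_apply_eq_tsum_fiber]
    exact abs_tsum_sub_tsum_le (h₁.subtype _) (h₂.subtype _)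
  exact (Summable.of_nonneg_of_le (fun _ => abs_nonneg _) hpt hD.summable).tsum_le_tsum hpt
    hD.summable |>.trans_eq hD.tsum_eq

end Pushforward

section Truncation

variable {S : Type*} [Monoid S] [DecidableEq S]

noncomputable def truncate (E : Finset S) (θ : S → ℝ) : S → ℝ :=
  (↑E : Set S).indicator θ + Pi.single 1 (1 - ∑ t ∈ E, θ t)

lemma truncate_eq_zero {E : Finset S} {u : S} (hu : u ∉ insert 1 E) (θ : S → ℝ) :
    truncate E θ u = 0 := by
  rw [Finset.mem_insert, not_or] at hu
  simp [truncate, Set.indicator_of_notMem (Finset.mem_coe.not.2 hu.2), hu.1]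

lemma IsProbFn.truncate {θ : S → ℝ} (h : IsProbFn θ) (E : Finset S) :
    IsProbFn (truncate E θ) := by
  have hδ : (0 : S → ℝ) ≤ Pi.single 1 (1 - ∑ t ∈ E, θ t) :=
    Pi.single_nonneg.2 (sub_nonneg.2 (h.sum_le_one E))
  refine ⟨fun u => add_nonneg (Set.indicator_nonneg (fun t _ => h.1 t) u) (hδ u), ?_⟩
  have hsum := (hasSum_indicator_finset E θ).add (hasSum_pi_single 1 (1 - ∑ t ∈ E, θ t))
  rwa [add_sub_cancel] at hsum

lemma dist1_truncate_self_le {θ : S → ℝ} (h : IsProbFn θ) (E : Finset S) :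
    dist1 θ (truncate E θ) ≤ 2 * (1 - ∑ t ∈ E, θ t) := by
  set c := 1 - ∑ t ∈ E, θ t
  set δ : S → ℝ := Pi.single 1 c
  have hδ : 0 ≤ δ := Pi.single_nonneg.2 (sub_nonneg.2 (h.sum_le_one E))
  have htail : HasSum ((↑E : Set S)ᶜ.indicator θ) c := by
    rw [Set.indicator_compl]
    exact h.2.sub (hasSum_indicator_finset E θ)
  have hpt : ∀ u, |θ u - truncate E θ u| ≤ (↑E : Set S)ᶜ.indicator θ u + δ u := by
    intro u
    have hsplit := congrFun (Set.indicator_self_add_compl (↑E : Set S) θ) u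
    have hθu : θ u - truncate E θ u = (↑E : Set S)ᶜ.indicator θ u - δ u := by
      simp only [truncate, Pi.add_apply] at hsplit ⊢
      linarith
    rw [hθu]
    refine (abs_sub _ _).trans_eq ?_
    rw [abs_of_nonneg (Set.indicator_nonneg (fun t _ => h.1 t) u), abs_of_nonneg (hδ u)]
  have hle := hasSum_le hpt (summable_abs_sub h.summable (h.truncate E).summable).hasSum
    (htail.add (hasSum_pi_single 1 c))
  exact hle.trans_eq (two_mul c).symm

lemma dist1_truncate_le {θ₁ θ₂ : S → ℝ} (h₁ : IsProbFn θ₁) (h₂ : IsProbFn θ₂) (E : Finset S) :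
    dist1 (truncate E θ₁) (truncate E θ₂) ≤ 2 * dist1 θ₁ θ₂ := by
  set D : S → ℝ := fun t => |θ₁ t - θ₂ t|
  set c := |∑ t ∈ E, θ₁ t - ∑ t ∈ E, θ₂ t|
  set δ : S → ℝ := Pi.single 1 c
  have hpt : ∀ u, |truncate E θ₁ u - truncate E θ₂ u| ≤ (↑E : Set S).indicator D u + δ u := by
    have hind : ∀ u, |(↑E : Set S).indicator θ₁ u - (↑E : Set S).indicator θ₂ u|
        = (↑E : Set S).indicator D u := fun u => by
      by_cases hE : u ∈ (↑E : Set S) <;> simp [hE, D]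
    intro u
    by_cases hu : u = 1
    · subst hu
      have hsplit : truncate E θ₁ 1 - truncate E θ₂ 1 = ((↑E : Set S).indicator θ₁ 1
          - (↑E : Set S).indicator θ₂ 1) + (∑ t ∈ E, θ₂ t - ∑ t ∈ E, θ₁ t) := by
        simp only [truncate, Pi.add_apply, Pi.single_eq_same]
        ring
      rw [hsplit, ← hind]
      simpa [δ, c, abs_sub_comm] using abs_add_le ((↑E : Set S).indicator θ₁ 1
        - (↑E : Set S).indicator θ₂ 1) (∑ t ∈ E, θ₂ t - ∑ t ∈ E, θ₁ t)
    · simp [truncate, hu, δ, hind]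
  have hDE : ∑ t ∈ E, D t ≤ dist1 θ₁ θ₂ :=
    (summable_abs_sub h₁.summable h₂.summable).sum_le_tsum E fun _ _ => abs_nonneg _
  have hc : c ≤ ∑ t ∈ E, D t := by
    simp only [c, ← Finset.sum_sub_distrib]
    exact Finset.abs_sum_le_sum_abs _ _
  have hle := hasSum_le hpt
    (summable_abs_sub (h₁.truncate E).summable (h₂.truncate E).summable).hasSum
    ((hasSum_indicator_finset E D).add (hasSum_pi_single 1 c))
  change dist1 _ _ ≤ _ at hle
  linarith

end Truncation

lemma dist1_truncate_pushf_le {S : Type*} [Monoid S] [DecidableEq S] {θ θ' : S → ℝ}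
    (h : IsProbFn θ) (h' : IsProbFn θ') (E : Finset S) (s : S) :
    dist1 (truncate E θ) (pushf s (truncate E θ'))
      ≤ 2 * (1 - ∑ t ∈ E, θ t) + dist1 θ (pushf s θ') + 2 * (1 - ∑ t ∈ E, θ' t) := by
  have hpush : dist1 (pushf s θ') (pushf s (truncate E θ')) ≤ 2 * (1 - ∑ t ∈ E, θ' t) :=
    (dist1_pushf_le h'.summable (h'.truncate E).summable s).trans (dist1_truncate_self_le h' E)
  have htrunc : dist1 (truncate E θ) θ ≤ 2 * (1 - ∑ t ∈ E, θ t) :=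
    dist1_comm θ _ ▸ dist1_truncate_self_le h E
  have htri₁ := dist1_triangle (h.truncate E).summable h.summable ((h'.truncate E).pushf s).summable
  have htri₂ := dist1_triangle h.summable (h'.pushf s).summable ((h'.truncate E).pushf s).summable
  linarith

section ContinuousFamily

variable {X S : Type*} [TopologicalSpace X] [Monoid S]

lemma L1Cont.continuous_apply {θ : X → S → ℝ} (hc : L1Cont θ) (hs : ∀ x, Summable (θ x)) (t : S) :
    Continuous fun x => θ x t :=
  continuous_iff_continuousAt.2 fun x₀ => tendsto_iff_dist_tendsto_zero.2 <|
    squeeze_zero (fun _ => dist_nonneg) (fun x => abs_apply_sub_le_dist1 (hs x) (hs x₀) t) (hc x₀)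

lemma L1Cont.exists_finset_tail_lt {θ : X → S → ℝ} (hc : L1Cont θ) (hp : ∀ x, IsProbFn (θ x))
    {K : Set X} (hK : IsCompact K) {δ : ℝ} (hδ : 0 < δ) :
    ∃ E : Finset S, ∀ x ∈ K, 1 - ∑ t ∈ E, θ x t < δ := by
  have hopen : ∀ E : Finset S, IsOpen {x | 1 - ∑ t ∈ E, θ x t < δ} := fun E =>
    isOpen_lt (continuous_const.sub (continuous_finsetSum E fun t _ =>
      hc.continuous_apply (fun x => (hp x).summable) t)) continuous_const
  have hcover : K ⊆ ⋃ E : Finset S, {x | 1 - ∑ t ∈ E, θ x t < δ} := fun x _ =>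
    Set.mem_iUnion.2 (((hp x).2.eventually_const_lt (by linarith : 1 - δ < 1)).exists.imp
      fun E hE => by simp only [Set.mem_ofPred_eq]; linarith)
  have hmono : Monotone fun E : Finset S => {x | 1 - ∑ t ∈ E, θ x t < δ} := fun E E' hEE' x hx =>
    lt_of_le_of_lt (sub_le_sub_left
      (Finset.sum_le_sum_of_subset_of_nonneg hEE' fun t _ _ => (hp x).1 t) 1) hx
  exact hK.elim_directed_cover _ hopen hcover hmono.directed_le

variable [DecidableEq S]

lemma L1Cont.truncate {θ : X → S → ℝ} (hc : L1Cont θ) (hp : ∀ x, IsProbFn (θ x)) (E : Finset S) :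
    L1Cont fun x => truncate E (θ x) := fun x₀ => by
  have h2 : Tendsto (fun x => 2 * dist1 (θ x) (θ x₀)) (𝓝 x₀) (𝓝 0) := by
    have h2 := (hc x₀).const_mul 2
    rwa [mul_zero] at h2
  exact squeeze_zero (fun x => dist1_nonneg _ _) (fun x => dist1_truncate_le (hp x) (hp x₀) E) h2

end ContinuousFamily

section UniformReiter

variable {X S : Type*} [TopologicalSpace X] [Monoid S] [DecidableEq S]

theorem UniformReiter.exists_finite_support {act : X → S → X} (h : UniformReiter act)
    (hact_cont : ∀ s, Continuous fun x => act x s) {ε : ℝ} (hε : 0 < ε) (F : Finset S)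
    {C : Set X} (hC : IsCompact C) :
    ∃ θ : X → S → ℝ,
      (∀ x, IsProbFn (θ x)) ∧ L1Cont θ ∧
      (∀ s ∈ F, ∀ x ∈ C, dist1 (θ x) (pushf s (θ (act x s))) < ε) ∧
      ({s : S | ∃ x : X, 0 < θ x s}).Finite := by
  obtain ⟨θ, hp, hc, hinv⟩ := h
  obtain ⟨N, hN⟩ := hinv C hC F (ε / 2) (by linarith)
  set K := C ∪ ⋃ s ∈ F, (fun x => act x s) '' C
  have hK : IsCompact K :=
    hC.union (F.finite_toSet.isCompact_biUnion fun s _ => hC.image (hact_cont s))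
  obtain ⟨E, hE⟩ := (hc N).exists_finset_tail_lt (hp N) hK (by linarith : 0 < ε / 8)
  refine ⟨fun x => truncate E (θ N x), fun x => (hp N x).truncate E, (hc N).truncate (hp N) E,
    fun s hs x hx => ?_, (insert 1 E).finite_toSet.subset ?_⟩
  · have hxs : act x s ∈ K := Or.inr (Set.mem_biUnion hs (Set.mem_image_of_mem _ hx))
    have hest := dist1_truncate_pushf_le (hp N x) (hp N (act x s)) E s
    linarith [hN N le_rfl x hx s hs, hE x (Or.inl hx), hE _ hxs]
  · rintro u ⟨x, hx⟩
    by_contra hu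
    exact hx.ne' (truncate_eq_zero hu _)

theorem uniformReiter_of_forall_exists [WeaklyLocallyCompactSpace X] [SigmaCompactSpace X]
    [Countable S] (act : X → S → X)
    (h : ∀ ε : ℝ, 0 < ε → ∀ F : Finset S, ∀ C : Set X, IsCompact C →
      ∃ θ : X → S → ℝ, (∀ x, IsProbFn (θ x)) ∧ L1Cont θ ∧
        ∀ s ∈ F, ∀ x ∈ C, dist1 (θ x) (pushf s (θ (act x s))) < ε) :
    UniformReiter act := by
  let K := CompactExhaustion.choice X
  obtain ⟨F, hF⟩ := (atTop : Filter (Finset S)).exists_seq_tendsto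
  choose θ hp hc hinv using fun n : ℕ =>
    h (1 / (n + 1)) Nat.one_div_pos_of_nat (F n) (K n) (K.isCompact n)
  refine ⟨θ, hp, hc, fun C hC G ε hε => eventually_atTop.1 ?_⟩
  obtain ⟨m, hm⟩ := K.exists_superset_of_isCompact hC
  filter_upwards [eventually_ge_atTop m, tendsto_atTop.1 hF G,
    tendsto_one_div_add_atTop_nhds_zero_nat.eventually_lt_const hε] with n hmn hGn hεn x hx s hs
  exact (hinv n s (hGn hs) x (K.subset hmn (hm hx))).trans hεn

end UniformReiter

theorem uniformReiter_iff_tight_uniform_reiter_general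
    {X : Type*} [TopologicalSpace X] [LocallyCompactSpace X]
    [SecondCountableTopology X]
    {S : Type*} [Monoid S] [Countable S] [DecidableEq S]
    (act : X → S → X)
    (hact_cont : ∀ s, Continuous fun x => act x s) :
    UniformReiter act ↔
      ∀ ε : ℝ, 0 < ε → ∀ F : Finset S, ∀ C : Set X, IsCompact C →
        ∃ θ : X → S → ℝ,
          (∀ x, IsProbFn (θ x)) ∧ L1Cont θ ∧
          (∀ s ∈ F, ∀ x ∈ C, dist1 (θ x) (pushf s (θ (act x s))) < ε) ∧
          ({s : S | ∃ x : X, 0 < θ x s}).Finite := by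
  refine ⟨fun h ε hε F C hC => h.exists_finite_support hact_cont hε F hC, fun h => ?_⟩
  refine uniformReiter_of_forall_exists act fun ε hε F C hC => ?_
  obtain ⟨θ, hp, hc, hinv, -⟩ := h ε hε F C hC
  exact ⟨θ, hp, hc, hinv⟩

/-- **Characterisation of the uniform Reiter property for transformation
semigroupoids.** Let `X` be a locally compact second countable Hausdorff space and `S` a
countable discrete semigroup with identity acting on `X` from the right by continuous
maps. Then `X ⋊ S` is uniform Reiter iff for every `ε > 0`, finite `F ⊆ S` and compact
`C ⊆ X` there is a continuous family `(θ^x)` of probability measures on `S` with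
`‖θ^x - s θ^{x.s}‖_{ℓ¹} < ε` for all `s ∈ F`, `x ∈ C`, whose total support
`⋃_x supp θ^x` is finite. -/
theorem uniformReiter_iff_tight_uniform_reiter
    {X : Type*} [TopologicalSpace X] [LocallyCompactSpace X] [T2Space X]
    [SecondCountableTopology X]
    {S : Type*} [Monoid S] [Countable S] [DecidableEq S]
    (act : X → S → X)
    (hact_one : ∀ x, act x 1 = x)
    (hact_mul : ∀ x s t, act (act x s) t = act x (s * t))
    (hact_cont : ∀ s, Continuous fun x => act x s) :
    UniformReiter act ↔
      ∀ ε : ℝ, 0 < ε → ∀ F : Finset S, ∀ C : Set X, IsCompact C →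
        ∃ θ : X → S → ℝ,
          (∀ x, IsProbFn (θ x)) ∧ L1Cont θ ∧
          (∀ s ∈ F, ∀ x ∈ C, dist1 (θ x) (pushf s (θ (act x s))) < ε) ∧
          ({s : S | ∃ x : X, 0 < θ x s}).Finite :=
  uniformReiter_iff_tight_uniform_reiter_general act hact_cont
end

section
/- Let S be a metric semigroup and f ∈ LUC(S). Let K_f denote the closure, in the topology of pointwise convergence on functions S → ℂ, of the convex hull of the set {f * δ_s : s ∈ S} of right translates of f, where (f * δ_s)(x) = f(xs). Then on K_f the topology of pointwise convergence coincides with the topology of uniform convergence on compact subsets of S, and K_f is compact in these topologies. -/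
open BoundedContinuousFunction Filter Topology

/-- `Kf f` is the closure, in the topology of pointwise convergence on `S → ℂ`,
of the convex hull of the set of right translates `f * δ_s : x ↦ f (x * s)` of `f`. -/
noncomputable def Kf {S : Type*} [Semigroup S] [MetricSpace S] [ContinuousMul S]
    (f : S →ᵇ ℂ) : Set (S → ℂ) :=
  closure (convexHull ℝ {g : S → ℂ | ∃ s : S, g = fun x => f (x * s)})

section Aux

open Set

variable {S : Type*} [Semigroup S] [MetricSpace S] [ContinuousMul S] (f : S →ᵇ ℂ)

/-- The key pointwise bound, valid on all of `Kf f`. -/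
lemma Kf_bound (x y : S) (c : ℝ)
    (hT : ∀ g ∈ {g : S → ℂ | ∃ s : S, g = fun x => f (x * s)}, ‖g y - g x‖ ≤ c) :
    ∀ g ∈ Kf f, ‖g y - g x‖ ≤ c := by
  set L : (S → ℂ) →ₗ[ℝ] ℂ :=
    { toFun := fun g => g y - g x
      map_add' := fun g h => by simp; ring
      map_smul' := fun r g => by simp [smul_sub] }
  have hconv : Convex ℝ {g : S → ℂ | ‖g y - g x‖ ≤ c} := by
    have : {g : S → ℂ | ‖g y - g x‖ ≤ c} = L ⁻¹' (Metric.closedBall 0 c) := by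
      ext g; simp [L, Metric.mem_closedBall, dist_eq_norm]
    rw [this]
    exact (convex_closedBall (0 : ℂ) c).linear_preimage L
  have hclosed : IsClosed {g : S → ℂ | ‖g y - g x‖ ≤ c} := by
    have : Continuous fun g : S → ℂ => ‖g y - g x‖ :=
      (((continuous_apply y).sub (continuous_apply x)).norm)
    exact isClosed_le this continuous_const
  intro g hg
  exact closure_minimal (convexHull_min hT hconv) hclosed hg

lemma Kf_equicontinuous (hf : f ∈ LUC S) :
    Equicontinuous (fun g : Kf f => (g : S → ℂ)) := by
  intro x
  rw [Metric.equicontinuousAt_iff]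
  intro ε hε
  have hcont : Continuous fun a : S => lTrans a f := hf
  have := (Metric.continuous_iff.mp hcont) x (ε / 2) (by positivity)
  obtain ⟨δ, hδ, hδ'⟩ := this
  refine ⟨δ, hδ, fun y hy g => ?_⟩
  have key : ∀ g ∈ Kf f, ‖g y - g x‖ ≤ ε / 2 := by
    refine Kf_bound f x y (ε / 2) ?_
    rintro g ⟨s, rfl⟩
    have h1 : f (y * s) - f (x * s) = (lTrans y f - lTrans x f) s := by
      simp [lTrans]
    rw [h1]
    calc ‖(lTrans y f - lTrans x f) s‖ ≤ ‖lTrans y f - lTrans x f‖ :=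
          (lTrans y f - lTrans x f).norm_coe_le_norm s
      _ ≤ ε / 2 := by
          rw [← dist_eq_norm]
          exact le_of_lt (hδ' y hy)
  have := key g.1 g.2
  rw [dist_comm, dist_eq_norm]
  calc ‖(g : S → ℂ) y - (g : S → ℂ) x‖ ≤ ε / 2 := this
    _ < ε := by linarith

lemma Kf_pointwise_bound (x : S) : ∀ g ∈ Kf f, ‖g x‖ ≤ ‖f‖ := by
  have hconv : Convex ℝ {g : S → ℂ | ‖g x‖ ≤ ‖f‖} := by
    set L : (S → ℂ) →ₗ[ℝ] ℂ :=
      { toFun := fun g => g x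
        map_add' := fun g h => rfl
        map_smul' := fun r g => rfl }
    have : {g : S → ℂ | ‖g x‖ ≤ ‖f‖} = L ⁻¹' (Metric.closedBall 0 ‖f‖) := by
      ext g; simp [L, Metric.mem_closedBall, dist_eq_norm]
    rw [this]
    exact (convex_closedBall (0 : ℂ) ‖f‖).linear_preimage L
  have hclosed : IsClosed {g : S → ℂ | ‖g x‖ ≤ ‖f‖} :=
    isClosed_le ((continuous_apply x).norm) continuous_const
  intro g hg
  refine closure_minimal (convexHull_min ?_ hconv) hclosed hg
  rintro g ⟨s, rfl⟩
  exact f.norm_coe_le_norm (_ * s)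

end Aux

/-- **Compactness of `K_f` and coincidence of the pointwise and compact-open topologies
on it.** For `f ∈ LUC S`, the set `K_f` is compact in the topology of pointwise
convergence, and on `K_f` the topology of pointwise convergence coincides with the
topology of uniform convergence on compact subsets of `S`. -/
theorem Kf_compact_and_topologies_coincide
    {S : Type*} [Semigroup S] [MetricSpace S] [ContinuousMul S]
    (f : S →ᵇ ℂ) (hf : f ∈ LUC S) :
    IsCompact (Kf f) ∧
    TopologicalSpace.induced (fun g : Kf f => (g : S → ℂ)) inferInstance =
      TopologicalSpace.induced
        (fun g : Kf f => UniformOnFun.ofFun {K : Set S | IsCompact K} (g : S → ℂ))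
        (UniformOnFun.topologicalSpace S ℂ {K : Set S | IsCompact K}) := by
  have hcover : ⋃₀ {K : Set S | IsCompact K} = Set.univ :=
    Set.eq_univ_iff_forall.mpr fun x =>
      Set.mem_sUnion_of_mem (Set.mem_singleton x) isCompact_singleton
  have heq : ∀ K ∈ {K : Set S | IsCompact K},
      EquicontinuousOn (fun g : Kf f => (g : S → ℂ)) K :=
    fun K _ => (Kf_equicontinuous f hf).equicontinuousOn K
  constructor
  · -- compactness
    have hsub : Kf f ⊆ Set.pi Set.univ (fun _ : S => Metric.closedBall (0 : ℂ) ‖f‖) := by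
      intro g hg x _
      simpa [Metric.mem_closedBall, dist_eq_norm] using Kf_pointwise_bound f x g hg
    exact (isCompact_univ_pi fun _ => isCompact_closedBall 0 ‖f‖).of_isClosed_subset
      isClosed_closure hsub
  · -- topologies coincide
    have h := (EquicontinuousOn.isInducing_uniformOnFun_iff_pi
      (F := fun g : Kf f => (g : S → ℂ)) hcover (fun K hK => hK) heq).mpr
      IsInducing.subtypeVal
    exact IsInducing.subtypeVal.eq_induced.symm.trans h.eq_induced
end

section
/- Let S be a metric semigroup, f ∈ LUC(S), and π a Borel probability measure on S. Then f * π belongs to K_f, the closure in the topology of pointwise convergence of the convex hull of the right translates {f * δ_s : s ∈ S}. -/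
open MeasureTheory BoundedContinuousFunction Filter Topology

/-- **The convolution `f * π` lies in `K_f`.** For a metric semigroup `S`,
`f ∈ LUC S` and a Borel probability measure `π` on `S`, the function
`x ↦ (f * π)(x) = ∫ f (x y) dπ(y)` belongs to the pointwise closure of the convex hull
of the right translates of `f`. -/
theorem conv_mem_Kf
    {S : Type*} [Semigroup S] [MetricSpace S] [ContinuousMul S]
    [MeasurableSpace S] [BorelSpace S]
    (f : S →ᵇ ℂ) (hf : f ∈ LUC S) (π : Measure S) [IsProbabilityMeasure π] :
    (fun x : S => ∫ y, f (x * y) ∂π) ∈ Kf f := by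
  classical
  rw [Kf, mem_closure_iff]
  intro O hO hmemO
  obtain ⟨I, u, hu, hsub⟩ := isOpen_pi_iff.1 hO _ hmemO
  set T : Set (S → ℂ) := {g : S → ℂ | ∃ s : S, g = fun x => f (x * s)} with hT
  set g : S → (↥I → ℂ) := fun y i => f ((i : S) * y) with hg
  have hgc : Continuous g := by
    apply continuous_pi
    intro i
    exact f.continuous.comp (continuous_const.mul continuous_id)
  have hgi : Integrable g π := by
    refine ⟨hgc.aestronglyMeasurable, ?_⟩
    refine MeasureTheory.HasFiniteIntegral.of_bounded (C := ‖f‖) ?_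
    refine ae_of_all _ fun y => ?_
    refine (pi_norm_le_iff_of_nonneg (norm_nonneg f)).2 fun i => ?_
    exact f.norm_coe_le_norm _
  have hconv : (∫ y, g y ∂π) ∈ closure (convexHull ℝ (Set.range g)) := by
    refine (convex_convexHull ℝ _).closure.integral_mem isClosed_closure ?_ hgi
    exact ae_of_all _ fun y => subset_closure (subset_convexHull _ _ ⟨y, rfl⟩)
  have hcoord : ∀ i : ↥I, (∫ y, g y ∂π) i = ∫ y, f ((i : S) * y) ∂π := by
    intro i
    have := (ContinuousLinearMap.proj (R := ℂ) (φ := fun _ : ↥I => ℂ) i).integral_comp_comm hgi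
    simpa using this.symm
  set box : Set (↥I → ℂ) := Set.univ.pi fun i => u (i : S) with hbox
  have hboxopen : IsOpen box :=
    isOpen_set_pi Set.finite_univ fun i _ => (hu (i : S) i.2).1
  have hmembox : (∫ y, g y ∂π) ∈ box := by
    intro i _
    rw [hcoord i]
    exact (hu (i : S) i.2).2
  obtain ⟨p, hpbox, hpc⟩ := _root_.mem_closure_iff.1 hconv box hboxopen hmembox
  -- restriction linear map
  set R : (S → ℂ) →ₗ[ℝ] (↥I → ℂ) := LinearMap.funLeft ℝ ℂ (fun i : ↥I => (i : S)) with hR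
  have hrange : Set.range g = R '' T := by
    ext q
    constructor
    · rintro ⟨y, rfl⟩
      exact ⟨fun x => f (x * y), ⟨y, rfl⟩, rfl⟩
    · rintro ⟨h, ⟨s, rfl⟩, rfl⟩
      exact ⟨s, rfl⟩
  rw [hrange, ← R.image_convexHull] at hpc
  obtain ⟨h, hhc, hhp⟩ := hpc
  refine ⟨h, hsub ?_, hhc⟩
  intro x hx
  have : R h ⟨x, hx⟩ ∈ u x := by
    rw [hhp]
    exact hpbox ⟨x, hx⟩ (Set.mem_univ _)
  simpa [hR, LinearMap.funLeft_apply] using this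
end
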